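/- arXiv:1902.10736 — 5 statements merged into one kernel-verified Lean document; each statement's English description precedes it below -/
import Mathlib

section
/- Let ρ : ℝ² → ℝ be a nonnegative integrable function with finite entropy ∫ ρ ln ρ < ∞ and finite second moment M₂(ρ) = ∫ |x|² ρ(x) dx < ∞. Then ∫ ρ |ln ρ| dx ≤ ∫ ρ ln ρ dx + M₂(ρ) + 2 ln(2π) ∫ ρ dx + 2/e. -/
open MeasureTheory Real Filter
open scoped ENNReal Topology

lemma carleman_log_le {t : ℝ} (ht : 0 < t) : Real.log t ≤ t / Real.exp 1 := by
  have h := Real.log_le_sub_one_of_pos (x := t / Real.exp 1) (by positivity)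
  have hlog : Real.log (t / Real.exp 1) = Real.log t - 1 := by
    rw [Real.log_div (ne_of_gt ht) (Real.exp_ne_zero 1), Real.log_exp]
  linarith [hlog ▸ h]

/-- **Carleman estimate.** For a nonnegative integrable density `ρ` on `ℝ²` with finite
entropy and finite second moment,
`∫ ρ |ln ρ| ≤ ∫ ρ ln ρ + M₂(ρ) + 2 ln(2π) ∫ ρ + 2/e`. -/
theorem carleman_estimate (ρ : EuclideanSpace ℝ (Fin 2) → ℝ)
    (hρ : ∀ x, 0 ≤ ρ x) (h1 : Integrable ρ)
    (hent : Integrable (fun x => ρ x * Real.log (ρ x)))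
    (hmom : Integrable (fun x => ‖x‖ ^ 2 * ρ x)) :
    ∫ x, ρ x * |Real.log (ρ x)| ≤
      (∫ x, ρ x * Real.log (ρ x)) + (∫ x, ‖x‖ ^ 2 * ρ x)
        + 2 * Real.log (2 * π) * (∫ x, ρ x) + 2 / Real.exp 1 := by
  have hπ : (0:ℝ) < 2 * π := by positivity
  set g : EuclideanSpace ℝ (Fin 2) → ℝ :=
    fun x => Real.exp (-(1/2) * ‖x‖ ^ 2) / (2 * π) with hgdef
  have hgpos : ∀ x, 0 < g x := fun x => by positivity
  have hlog2π : 0 ≤ Real.log (2 * π) := by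
    apply Real.log_nonneg
    nlinarith [Real.pi_gt_three]
  -- integrability of the Gaussian
  have hexp_int : Integrable
      (fun x : EuclideanSpace ℝ (Fin 2) => Real.exp (-(1/2) * ‖x‖ ^ 2)) := by
    have hc := GaussianFourier.integrable_cexp_neg_mul_sq_norm_add (V := EuclideanSpace ℝ (Fin 2))
      (b := (1/2 : ℂ)) (by norm_num) 0 0
    have := hc.re
    refine this.congr (Eventually.of_forall fun x => ?_)
    have hz : (-(1/2 : ℂ) * (‖x‖ : ℂ) ^ 2) = ((-(1/2) * ‖x‖ ^ 2 : ℝ) : ℂ) := by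
      push_cast; ring
    simp only [zero_mul, add_zero, hz, RCLike.re_to_complex, Complex.exp_ofReal_re]
  have hg_int : Integrable g := hexp_int.div_const _
  -- value of the Gaussian integral
  have hexp_val : ∫ x : EuclideanSpace ℝ (Fin 2), Real.exp (-(1/2) * ‖x‖ ^ 2) = 2 * π := by
    have := GaussianFourier.integral_rexp_neg_mul_sq_norm (V := EuclideanSpace ℝ (Fin 2))
      (b := (1/2 : ℝ)) (by norm_num)
    rw [this]
    simp [finrank_euclideanSpace_fin]
    ring
  have hg_val : ∫ x, g x = 1 := by
    rw [hgdef]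
    simp only [integral_div, hexp_val]
    field_simp
  -- pointwise bound
  have hpt : ∀ x, ρ x * |Real.log (ρ x)| ≤
      ρ x * Real.log (ρ x) + ‖x‖ ^ 2 * ρ x + 2 * Real.log (2 * π) * ρ x
        + 2 * (g x / Real.exp 1) := by
    intro x
    set a := ρ x with ha
    have ha0 : 0 ≤ a := hρ x
    have hB0 : 0 ≤ ‖x‖ ^ 2 * a / 2 + Real.log (2 * π) * a + g x / Real.exp 1 := by
      have := (hgpos x).le
      positivity
    have hkey : -(a * Real.log a) ≤ ‖x‖ ^ 2 * a / 2 + Real.log (2 * π) * a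
        + g x / Real.exp 1 := by
      rcases eq_or_lt_of_le ha0 with h | h
      · simp [← h]
        positivity
      · have ht : 0 < g x / a := by positivity
        have h1' : a * Real.log (g x / a) ≤ g x / Real.exp 1 := by
          have := carleman_log_le ht
          calc a * Real.log (g x / a) ≤ a * ((g x / a) / Real.exp 1) :=
                mul_le_mul_of_nonneg_left this ha0
            _ = g x / Real.exp 1 := by field_simp
        have hlogg : Real.log (g x) = -(1/2) * ‖x‖ ^ 2 - Real.log (2 * π) := by
          rw [hgdef]
          rw [Real.log_div (Real.exp_ne_zero _) (ne_of_gt hπ), Real.log_exp]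
        have h2' : Real.log (g x / a) = Real.log (g x) - Real.log a :=
          Real.log_div (ne_of_gt (hgpos x)) (ne_of_gt h)
        rw [h2', hlogg] at h1'
        nlinarith
    rcases abs_cases (Real.log a) with ⟨heq, _⟩ | ⟨heq, _⟩ <;> rw [heq] <;> nlinarith
  -- integrability of both sides
  have hlhs_int : Integrable (fun x => ρ x * |Real.log (ρ x)|) := by
    refine hent.abs.congr (Eventually.of_forall fun x => ?_)
    show |ρ x * Real.log (ρ x)| = ρ x * |Real.log (ρ x)|
    rw [abs_mul, abs_of_nonneg (hρ x)]
  have hG_int : Integrable (fun x => 2 * (g x / Real.exp 1)) :=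
    ((hg_int.div_const _).const_mul 2)
  have hrhs_int : Integrable (fun x => ρ x * Real.log (ρ x) + ‖x‖ ^ 2 * ρ x
      + 2 * Real.log (2 * π) * ρ x + 2 * (g x / Real.exp 1)) :=
    ((hent.add hmom).add (h1.const_mul (2 * Real.log (2 * π)))).add hG_int
  have hmono := integral_mono hlhs_int hrhs_int hpt
  have hB : Integrable (fun x => ρ x * Real.log (ρ x) + ‖x‖ ^ 2 * ρ x) := hent.add hmom
  have hA : Integrable (fun x => ρ x * Real.log (ρ x) + ‖x‖ ^ 2 * ρ x
      + 2 * Real.log (2 * π) * ρ x) := hB.add (h1.const_mul (2 * Real.log (2 * π)))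
  have hC : Integrable (fun x => 2 * Real.log (2 * π) * ρ x) :=
    h1.const_mul (2 * Real.log (2 * π))
  rw [integral_add hA hG_int, integral_add hB hC,
    integral_add hent hmom, integral_const_mul, integral_const_mul,
    integral_div, hg_val, mul_one_div] at hmono
  linarith
end

section
/- Let f, g be nonnegative densities on ℝ² with ∫ f = ∫ g = β > 0, and suppose ∇φ pushes f dx forward to g dx where φ is convex and twice differentiable a.e. with Aleksandrov Hessian D²φ. Then ∫ g ln g dx = ∫ f ln f dx − ∫ f(x) ln(det_A D²φ(x)) dx, where det_A D²φ denotes the determinant of the absolutely continuous part of the Hessian measure. -/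
open MeasureTheory Real Filter
open scoped ENNReal Topology

open Set Metric
open scoped RealInnerProductSpace

noncomputable section
local notation "E2" => EuclideanSpace ℝ (Fin 2)

/-- Subgradient inequality at a point of differentiability of a convex function. -/
lemma mccann_subgrad {φ : E2 → ℝ} (hφ : ConvexOn ℝ Set.univ φ) {z : E2}
    (hz : DifferentiableAt ℝ φ z) (u : E2) :
    φ z + ⟪gradient φ z, u - z⟫ ≤ φ u := by
  set h : ℝ → ℝ := fun t => φ (AffineMap.lineMap z u t) with hh
  have hconv : ConvexOn ℝ Set.univ h := by
    have := hφ.comp_affineMap (AffineMap.lineMap z u)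
    exact this
  have hderiv : HasDerivAt h ⟪gradient φ z, u - z⟫ 0 := by
    have h1 : HasDerivAt (fun t : ℝ => AffineMap.lineMap z u t) (u - z) 0 := by
      simp only [AffineMap.lineMap_apply_module']
      have : HasDerivAt (fun t : ℝ => t • (u - z)) ((1:ℝ) • (u - z)) 0 :=
        (hasDerivAt_id (0:ℝ)).smul_const (u - z)
      simpa using this.add_const z
    have h2 : HasFDerivAt φ (fderiv ℝ φ z) z := hz.hasFDerivAt
    have h2' : HasFDerivAt φ (fderiv ℝ φ z) (AffineMap.lineMap z u (0:ℝ)) := by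
      simpa [AffineMap.lineMap_apply_module'] using h2
    have h3 := h2'.comp_hasDerivAt (x := (0:ℝ)) h1
    · have : fderiv ℝ φ z (u - z) = ⟪gradient φ z, u - z⟫ := by
        rw [← InnerProductSpace.toDual_symm_apply]
        rfl
      rw [← this]
      exact h3
  have := hconv.le_slope_of_hasDerivAt (Set.mem_univ (0:ℝ)) (Set.mem_univ (1:ℝ))
    zero_lt_one hderiv
  have hs : slope h 0 1 = φ u - φ z := by
    simp [slope, hh]
  rw [hs] at this
  linarith

/-- A convex function on the plane is differentiable a.e. -/
lemma mccann_rademacher {φ : E2 → ℝ} (hφ : ConvexOn ℝ Set.univ φ) :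
    ∀ᵐ x, DifferentiableAt ℝ φ x := by
  have hcont : Continuous φ := hφ.locallyLipschitz.continuous
  have key : ∀ n : ℕ, ∀ᵐ x, x ∈ ball (0:E2) n → DifferentiableAt ℝ φ x := by
    intro n
    have hb : Bornology.IsBounded (φ '' ball (0:E2) (n+1)) := by
      have : Bornology.IsBounded (φ '' closedBall (0:E2) (n+1)) :=
        (isCompact_closedBall _ _).image hcont |>.isBounded
      exact this.subset (Set.image_mono ball_subset_closedBall)
    obtain ⟨K, hK⟩ := (hφ.subset (subset_univ _) (convex_ball _ _)).exists_lipschitzOnWith_of_isBounded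
      (by norm_num : (n:ℝ) < n+1) hb
    filter_upwards [hK.ae_differentiableWithinAt_of_mem (μ := volume)] with x hx hxn
    exact (hx hxn).differentiableAt (isOpen_ball.mem_nhds hxn)
  rw [← ae_all_iff] at key
  filter_upwards [key] with x hx
  obtain ⟨n, hn⟩ : ∃ n : ℕ, ‖x‖ < n := exists_nat_gt ‖x‖
  exact hx n (by simpa [mem_ball, dist_eq_norm] using hn)

/-- Approximating points from a dense set along a ray, with control on `T` via its derivative. -/
lemma mccann_approx {T : E2 → E2} {B : E2 →L[ℝ] E2} {x : E2} (hT : HasFDerivAt T B x)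
    {W : Set E2} (hW : Dense W) (c : E2) :
    ∃ z : ℝ → E2, (∀ t, 0 < t → z t ∈ W) ∧
      Tendsto z (𝓝[>] (0:ℝ)) (𝓝 x) ∧
      Tendsto (fun t => t⁻¹ • (z t - x)) (𝓝[>] (0:ℝ)) (𝓝 c) ∧
      Tendsto (fun t => t⁻¹ • (T (z t) - T x)) (𝓝[>] (0:ℝ)) (𝓝 (B c)) := by
  -- choice of points
  have hex : ∀ t : ℝ, 0 < t → ∃ w ∈ W, dist w (x + t • c) < t^2 := by
    intro t ht
    have := hW
    rw [Metric.dense_iff] at this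
    obtain ⟨w, hw1, hw2⟩ := this (x + t • c) (t^2) (by positivity)
    exact ⟨w, hw2, by simpa [dist_comm] using mem_ball.1 hw1⟩
  classical
  set z : ℝ → E2 := fun t => if h : 0 < t then (hex t h).choose else x with hz
  have hzW : ∀ t, 0 < t → z t ∈ W := fun t ht => by
    simp only [hz, dif_pos ht]; exact (hex t ht).choose_spec.1
  have hzd : ∀ t, 0 < t → ‖z t - (x + t • c)‖ ≤ t^2 := fun t ht => by
    simp only [hz, dif_pos ht]
    have := (hex t ht).choose_spec.2
    rw [dist_eq_norm] at this; exact this.le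
  have h0 : ∀ᶠ t in 𝓝[>] (0:ℝ), 0 < t := eventually_mem_nhdsWithin
  -- (z t - x)/t → c
  have key2 : Tendsto (fun t => t⁻¹ • (z t - x)) (𝓝[>] (0:ℝ)) (𝓝 c) := by
    have hb : ∀ᶠ t in 𝓝[>] (0:ℝ), ‖t⁻¹ • (z t - x) - c‖ ≤ t := by
      filter_upwards [h0] with t ht
      have : t⁻¹ • (z t - x) - c = t⁻¹ • (z t - (x + t • c)) := by
        have h1 : t⁻¹ • (t • c) = c := by
          rw [smul_smul, inv_mul_cancel₀ ht.ne', one_smul]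
        rw [smul_sub, smul_sub, smul_add, h1]
        abel
      rw [this, norm_smul, norm_inv, Real.norm_of_nonneg ht.le]
      calc t⁻¹ * ‖z t - (x + t • c)‖ ≤ t⁻¹ * t^2 := by
            exact mul_le_mul_of_nonneg_left (hzd t ht) (by positivity)
        _ = t := by field_simp [ht.ne']
    have htend : Tendsto (fun t : ℝ => t) (𝓝[>] (0:ℝ)) (𝓝 0) :=
      tendsto_id.mono_left nhdsWithin_le_nhds
    have := squeeze_zero_norm' hb htend
    have h2 : Tendsto (fun t => (t⁻¹ • (z t - x) - c) + c) (𝓝[>] (0:ℝ)) (𝓝 (0 + c)) :=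
      this.add tendsto_const_nhds
    simpa using h2
  -- z → x
  have key1 : Tendsto z (𝓝[>] (0:ℝ)) (𝓝 x) := by
    have : Tendsto (fun t : ℝ => t • (t⁻¹ • (z t - x)) + x) (𝓝[>] (0:ℝ)) (𝓝 ((0:ℝ) • c + x)) := by
      exact ((tendsto_id.mono_left nhdsWithin_le_nhds).smul key2).add tendsto_const_nhds
    simp only [zero_smul, zero_add] at this
    apply this.congr'
    filter_upwards [h0] with t ht
    rw [smul_smul, mul_inv_cancel₀ ht.ne', one_smul]; abel
  refine ⟨z, hzW, key1, key2, ?_⟩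
  -- derivative control
  have hlittle := hT.isLittleO.comp_tendsto key1
  have hO : (fun t => z t - x) =O[𝓝[>] (0:ℝ)] (fun t : ℝ => t) := by
    rw [Asymptotics.isBigO_iff]
    refine ⟨‖c‖ + 1, ?_⟩
    filter_upwards [h0, Filter.Tendsto.eventually_le_const (by norm_num : (0:ℝ) < 1)
      (tendsto_id.mono_left nhdsWithin_le_nhds)] with t ht ht1
    have : ‖z t - x‖ ≤ t * ‖c‖ + t^2 := by
      have := hzd t ht
      calc ‖z t - x‖ = ‖(z t - (x + t • c)) + t • c‖ := by congr 1; abel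
        _ ≤ ‖z t - (x + t • c)‖ + ‖t • c‖ := norm_add_le _ _
        _ ≤ t^2 + t * ‖c‖ := by
            rw [norm_smul, Real.norm_of_nonneg ht.le]; linarith
        _ = t * ‖c‖ + t^2 := by ring
    rw [Real.norm_of_nonneg ht.le]
    simp only [id] at ht1
    nlinarith [ht.le, ht1, norm_nonneg c]
  have hlit2 := hlittle.trans_isBigO hO
  have hr0 : Tendsto (fun t => t⁻¹ • (T (z t) - T x - B (z t - x))) (𝓝[>] (0:ℝ)) (𝓝 0) := by
    rw [NormedAddCommGroup.tendsto_nhds_zero]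
    intro ε hε
    have := hlit2.def (half_pos hε)
    filter_upwards [this, h0] with t h1 ht
    rw [norm_smul, norm_inv, Real.norm_of_nonneg ht.le]
    rw [Real.norm_of_nonneg ht.le] at h1
    calc t⁻¹ * ‖T (z t) - T x - B (z t - x)‖ ≤ t⁻¹ * (ε/2 * t) := by
          exact mul_le_mul_of_nonneg_left h1 (by positivity)
      _ = ε/2 := by field_simp
      _ < ε := half_lt_self hε
  have hBc : Tendsto (fun t => B (t⁻¹ • (z t - x))) (𝓝[>] (0:ℝ)) (𝓝 (B c)) :=
    (B.continuous.tendsto c).comp key2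
  have := hr0.add hBc
  simp only [zero_add] at this
  apply this.congr'
  filter_upwards [h0] with t ht
  rw [B.map_smul, ← smul_add]
  congr 1
  abel

/-- The gradient of a convex function is injective on the set where it is differentiable
with invertible derivative (and the function itself is differentiable). -/
lemma mccann_inj {φ : E2 → ℝ} (hφ : ConvexOn ℝ Set.univ φ)
    (hWae : ∀ᵐ x, DifferentiableAt ℝ φ x) :
    Set.InjOn (gradient φ)
      {x | DifferentiableAt ℝ φ x ∧ DifferentiableAt ℝ (gradient φ) x ∧
           (fderiv ℝ (gradient φ) x).det ≠ 0} := by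
  set T := gradient φ with hT
  set W : Set E2 := {x | DifferentiableAt ℝ φ x} with hWdef
  have hWd : Dense W := Measure.dense_of_ae hWae
  rintro x ⟨hxW, hxT, hxdet⟩ y ⟨hyW, hyT, _⟩ hxy
  set B := fderiv ℝ T x with hB
  have hBx : HasFDerivAt T B x := hxT.hasFDerivAt
  set p := T x with hp
  set v := y - x with hv
  -- subgradient inequality
  have sub : ∀ z ∈ W, ∀ u, φ z + ⟪T z, u - z⟫ ≤ φ u := fun z hz u =>
    mccann_subgrad hφ hz u
  -- equality of φ along the segment endpoints
  have heq : φ y = φ x + ⟪p, v⟫ := by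
    have h1 := sub x hxW y
    have h2 := sub y hyW x
    rw [← hxy] at h2
    have : ⟪p, x - y⟫ = -⟪p, v⟫ := by
      rw [hv, ← inner_neg_right]; congr 1; abel
    rw [this] at h2
    linarith
  have h0 : ∀ᶠ t in 𝓝[>] (0:ℝ), 0 < t := eventually_mem_nhdsWithin
  -- Step A : ⟪B v, v⟫ = 0
  have stepA : ⟪B v, v⟫ = 0 := by
    obtain ⟨z, hzW, hz1, hz2, hz3⟩ := mccann_approx hBx hWd v
    have hge : (0:ℝ) ≤ ⟪B v, v⟫ := by
      have htend : Tendsto (fun t => ⟪t⁻¹ • (T (z t) - p), t⁻¹ • (z t - x)⟫)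
          (𝓝[>] (0:ℝ)) (𝓝 ⟪B v, v⟫) := hz3.inner hz2
      refine ge_of_tendsto htend ?_
      filter_upwards [h0] with t ht
      have i1 := sub (z t) (hzW t ht) x
      have i2 := sub x hxW (z t)
      have key : (0:ℝ) ≤ ⟪T (z t) - p, z t - x⟫ := by
        have e1 : ⟪T (z t), x - z t⟫ = -⟪T (z t), z t - x⟫ := by
          rw [← inner_neg_right]; congr 1; abel
        rw [e1] at i1
        rw [inner_sub_left]
        linarith
      rw [real_inner_smul_left, real_inner_smul_right]
      positivity
    have hle : ⟪B v, v⟫ ≤ 0 := by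
      have htc : Tendsto (fun t => y - z t) (𝓝[>] (0:ℝ)) (𝓝 v) := by
        have h' : Tendsto (fun _ : ℝ => y) (𝓝[>] (0:ℝ)) (𝓝 y) := tendsto_const_nhds
        simpa [hv] using h'.sub hz1
      have htend : Tendsto (fun t => ⟪t⁻¹ • (T (z t) - p), y - z t⟫)
          (𝓝[>] (0:ℝ)) (𝓝 ⟪B v, v⟫) := hz3.inner htc
      refine le_of_tendsto htend ?_
      filter_upwards [h0] with t ht
      have i1 := sub (z t) (hzW t ht) y
      have i2 := sub x hxW (z t)
      have key : ⟪T (z t) - p, y - z t⟫ ≤ 0 := by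
        have e1 : ⟪p, z t - x⟫ + ⟪p, y - z t⟫ = ⟪p, v⟫ := by
          rw [← inner_add_right]; congr 1; rw [hv]; abel
        rw [inner_sub_left]
        rw [heq] at i1
        linarith
      rw [real_inner_smul_left]
      have : t⁻¹ * ⟪T (z t) - p, y - z t⟫ ≤ 0 :=
        mul_nonpos_of_nonneg_of_nonpos (by positivity) key
      exact this
    linarith
  -- Step B : ∀ w, ∀ s > 0, s * ⟪B v, w⟫ ≤ ⟪B w, w⟫
  have stepB : ∀ w : E2, ∀ s : ℝ, 0 < s → s * ⟪B v, w⟫ ≤ ⟪B w, w⟫ := by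
    intro w s hs
    obtain ⟨z₁, hz₁W, hz₁1, hz₁2, hz₁3⟩ := mccann_approx hBx hWd (s • v)
    obtain ⟨z₂, hz₂W, hz₂1, hz₂2, hz₂3⟩ := mccann_approx hBx hWd w
    -- limit of the cyclic-monotonicity expression
    have hd12 : Tendsto (fun t => t⁻¹ • (z₂ t - z₁ t)) (𝓝[>] (0:ℝ)) (𝓝 (w - s • v)) := by
      have := hz₂2.sub hz₁2
      apply this.congr
      intro t
      rw [← smul_sub]
      congr 1; abel
    have hdx2 : Tendsto (fun t => t⁻¹ • (x - z₂ t)) (𝓝[>] (0:ℝ)) (𝓝 (-w)) := by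
      have := hz₂2.neg
      apply this.congr
      intro t
      rw [← smul_neg]
      congr 1; abel
    have htend : Tendsto (fun t => ⟪t⁻¹ • (T (z₁ t) - p), t⁻¹ • (z₂ t - z₁ t)⟫
        + ⟪t⁻¹ • (T (z₂ t) - p), t⁻¹ • (x - z₂ t)⟫) (𝓝[>] (0:ℝ))
        (𝓝 (⟪B (s • v), w - s • v⟫ + ⟪B w, -w⟫)) :=
      (hz₁3.inner hd12).add (hz₂3.inner hdx2)
    have hlim : ⟪B (s • v), w - s • v⟫ + ⟪B w, -w⟫ ≤ 0 := by
      refine le_of_tendsto htend ?_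
      filter_upwards [h0] with t ht
      have i1 := sub (z₁ t) (hz₁W t ht) (z₂ t)
      have i2 := sub (z₂ t) (hz₂W t ht) x
      have i3 := sub x hxW (z₁ t)
      have key : ⟪T (z₁ t) - p, z₂ t - z₁ t⟫ + ⟪T (z₂ t) - p, x - z₂ t⟫ ≤ 0 := by
        have e0 : ⟪p, z₂ t - z₁ t⟫ + ⟪p, x - z₂ t⟫ + ⟪p, z₁ t - x⟫ = 0 := by
          rw [← inner_add_right, ← inner_add_right]
          have : z₂ t - z₁ t + (x - z₂ t) + (z₁ t - x) = 0 := by abel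
          rw [this, inner_zero_right]
        rw [inner_sub_left, inner_sub_left]
        linarith
      rw [real_inner_smul_left, real_inner_smul_right, real_inner_smul_left,
        real_inner_smul_right]
      have h1 : (0:ℝ) ≤ t⁻¹ * t⁻¹ := by positivity
      calc t⁻¹ * (t⁻¹ * ⟪T (z₁ t) - p, z₂ t - z₁ t⟫)
            + t⁻¹ * (t⁻¹ * ⟪T (z₂ t) - p, x - z₂ t⟫)
          = (t⁻¹ * t⁻¹) * (⟪T (z₁ t) - p, z₂ t - z₁ t⟫ + ⟪T (z₂ t) - p, x - z₂ t⟫) := by ring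
        _ ≤ 0 := mul_nonpos_of_nonneg_of_nonpos h1 key
    have e1 : ⟪B (s • v), w - s • v⟫ = s * ⟪B v, w⟫ - s * s * ⟪B v, v⟫ := by
      simp only [B.map_smul, inner_sub_right, real_inner_smul_left, real_inner_smul_right]
      ring
    have e2 : ⟪B w, -w⟫ = -⟪B w, w⟫ := by rw [inner_neg_right]
    rw [e1, e2, stepA] at hlim
    linarith
  -- Step C : B v = 0
  have stepC : B v = 0 := by
    have hww : ∀ w : E2, ⟪B v, w⟫ ≤ 0 := by
      intro w
      by_contra hcon
      push_neg at hcon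
      have hs := stepB w (max 1 ((⟪B w, w⟫ + 1) / ⟪B v, w⟫))
        (lt_of_lt_of_le one_pos (le_max_left _ _))
      have : (⟪B w, w⟫ + 1) / ⟪B v, w⟫ * ⟪B v, w⟫ ≤ max 1 ((⟪B w, w⟫ + 1) / ⟪B v, w⟫) * ⟪B v, w⟫ :=
        mul_le_mul_of_nonneg_right (le_max_right _ _) hcon.le
      rw [div_mul_cancel₀ _ hcon.ne'] at this
      linarith
    have hz : ∀ w : E2, ⟪B v, w⟫ = 0 := by
      intro w
      have h1 := hww w
      have h2 := hww (-w)
      rw [inner_neg_right] at h2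
      linarith
    have := hz (B v)
    exact inner_self_eq_zero.1 this
  -- conclude: B injective since det ≠ 0
  have hBinj : Function.Injective B := by
    have := (B.toContinuousLinearEquivOfDetNeZero hxdet).injective
    intro a b hab
    exact this (by simpa using hab)
  have : v = 0 := by
    have h0' : B 0 = 0 := map_zero B
    exact hBinj (by rw [stepC, h0'])
  rw [hv, sub_eq_zero] at this
  exact this.symm

/-- **McCann's change-of-variables formula for the entropy.** Let `f, g` be nonnegative
densities on `ℝ²` of equal mass `β > 0`, and suppose the gradient of a convex function `φ`
pushes `f dx` forward to `g dx`, with `∇φ` differentiable a.e. with (Aleksandrov) Hessian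
`D`. Then `∫ g ln g = ∫ f ln f − ∫ f ln(det D²φ)`. -/
theorem entropy_change_of_variables
    (β : ℝ) (hβ : 0 < β)
    (f g φ : EuclideanSpace ℝ (Fin 2) → ℝ)
    (D : EuclideanSpace ℝ (Fin 2) → EuclideanSpace ℝ (Fin 2) →L[ℝ] EuclideanSpace ℝ (Fin 2))
    (hf : ∀ x, 0 ≤ f x) (hg : ∀ x, 0 ≤ g x)
    (hfi : Integrable f) (hgi : Integrable g)
    (hfm : ∫ x, f x = β) (hgm : ∫ x, g x = β)
    (hφ : ConvexOn ℝ Set.univ φ)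
    (hD : ∀ᵐ x, HasFDerivAt (gradient φ) (D x) x)
    (hpush : Measure.map (gradient φ) (volume.withDensity (fun x => ENNReal.ofReal (f x)))
      = volume.withDensity (fun x => ENNReal.ofReal (g x)))
    (hfe : Integrable (fun x => f x * Real.log (f x)))
    (hge : Integrable (fun x => g x * Real.log (g x)))
    (hdet : Integrable (fun x => f x * Real.log (LinearMap.det (D x).toLinearMap))) :
    ∫ x, g x * Real.log (g x)
      = (∫ x, f x * Real.log (f x))
        - ∫ x, f x * Real.log (LinearMap.det (D x).toLinearMap) := by
  set T := gradient φ with hTdef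
  set μ : Measure E2 := volume.withDensity (fun x => ENNReal.ofReal (f x)) with hμdef
  set ν : Measure E2 := volume.withDensity (fun x => ENNReal.ofReal (g x)) with hνdef
  -- measurability of the gradient map
  have hTmeas : Measurable T := by
    have h1 : Measurable (fderiv ℝ φ) := measurable_fderiv ℝ φ
    exact ((InnerProductSpace.toDual ℝ E2).symm.continuous.measurable).comp h1
  -- the good set S
  set S : Set E2 := {x | DifferentiableAt ℝ φ x ∧ DifferentiableAt ℝ T x ∧
      (fderiv ℝ T x).det ≠ 0} with hSdef
  have hSmeas : MeasurableSet S := by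
    have h1 : MeasurableSet {x | DifferentiableAt ℝ φ x} :=
      measurableSet_of_differentiableAt ℝ φ
    have h2 : MeasurableSet {x | DifferentiableAt ℝ T x} :=
      measurableSet_of_differentiableAt ℝ T
    have h3 : MeasurableSet {x : E2 | (fderiv ℝ T x).det ≠ 0} := by
      have : Measurable fun x => (fderiv ℝ T x).det :=
        ContinuousLinearMap.continuous_det.measurable.comp (measurable_fderiv ℝ T)
      exact (this (measurableSet_singleton 0)).compl
    exact (h1.inter (h2.inter h3)).congr (by ext x; simp [hSdef, mem_setOf_eq, and_assoc])
  have hinj : Set.InjOn T S := mccann_inj hφ (mccann_rademacher hφ)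
  have hfW : ∀ x ∈ S, HasFDerivWithinAt T (fderiv ℝ T x) S x := fun x hx =>
    hx.2.1.hasFDerivAt.hasFDerivWithinAt
  -- μ is finite
  have hμuniv : μ Set.univ = ENNReal.ofReal β := by
    rw [hμdef, withDensity_apply _ MeasurableSet.univ, Measure.restrict_univ,
      ← ofReal_integral_eq_lintegral_ofReal hfi (Filter.Eventually.of_forall hf), hfm]
  have hμfin : μ Set.univ < ∞ := by rw [hμuniv]; exact ENNReal.ofReal_lt_top
  have hμac : μ ≪ volume := withDensity_absolutelyContinuous _ _
  have hνac : ν ≪ volume := withDensity_absolutelyContinuous _ _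
  -- μ Sᶜ = 0
  have hμS : μ Sᶜ = 0 := by
    have h1 : μ {x | ¬ DifferentiableAt ℝ φ x} = 0 := by
      apply hμac
      exact ae_iff.1 (mccann_rademacher hφ)
    have h2 : μ {x | ¬ DifferentiableAt ℝ T x} = 0 := by
      apply hμac
      have : ∀ᵐ x, DifferentiableAt ℝ T x := by
        filter_upwards [hD] with x hx; exact hx.differentiableAt
      exact ae_iff.1 this
    have h3 : μ {x | DifferentiableAt ℝ T x ∧ (fderiv ℝ T x).det = 0} = 0 := by
      set Z : Set E2 := {x | DifferentiableAt ℝ T x ∧ (fderiv ℝ T x).det = 0} with hZ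
      have himg : volume (T '' Z) = 0 := by
        apply addHaar_image_eq_zero_of_det_fderivWithin_eq_zero volume
          (f' := fderiv ℝ T)
        · exact fun x hx => hx.1.hasFDerivAt.hasFDerivWithinAt
        · exact fun x hx => hx.2
      obtain ⟨V, hV1, hV2, hV3⟩ := exists_measurable_superset_of_null himg
      have hνV : ν V = 0 := hνac hV3
      have : μ (T ⁻¹' V) = ν V := by
        rw [← hpush, Measure.map_apply hTmeas hV2]
      have hle : μ Z ≤ μ (T ⁻¹' V) := by
        apply measure_mono
        intro x hx
        exact Set.mem_preimage.2 (hV1 (Set.mem_image_of_mem T hx))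
      rw [this, hνV] at hle
      exact le_antisymm hle zero_le
    have hsub : Sᶜ ⊆ {x | ¬ DifferentiableAt ℝ φ x} ∪ {x | ¬ DifferentiableAt ℝ T x}
        ∪ {x | DifferentiableAt ℝ T x ∧ (fderiv ℝ T x).det = 0} := by
      intro x hx
      simp only [hSdef, Set.mem_compl_iff, mem_setOf_eq, not_and_or, not_not] at hx
      rcases hx with h | h | h
      · exact Or.inl (Or.inl h)
      · exact Or.inl (Or.inr h)
      · by_cases hd : DifferentiableAt ℝ T x
        · exact Or.inr ⟨hd, h⟩
        · exact Or.inl (Or.inr hd)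
    have hU : μ ({x | ¬ DifferentiableAt ℝ φ x} ∪ {x | ¬ DifferentiableAt ℝ T x}
        ∪ {x | DifferentiableAt ℝ T x ∧ (fderiv ℝ T x).det = 0}) = 0 :=
      measure_union_null (measure_union_null h1 h2) h3
    exact le_antisymm (hU ▸ measure_mono hsub) zero_le
  -- measurability of images, and ν (T '' E') = μ E' for E' ⊆ S
  have himgmeas : ∀ E' : Set E2, MeasurableSet E' → E' ⊆ S → MeasurableSet (T '' E') := by
    intro E' hE' hE'S
    exact measurable_image_of_fderivWithin hE'
      (fun x hx => ((hE'S hx).2.1.hasFDerivAt).hasFDerivWithinAt) (hinj.mono hE'S)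
  have hνimg : ∀ E' : Set E2, MeasurableSet E' → E' ⊆ S → ν (T '' E') = μ E' := by
    intro E' hE' hE'S
    rw [← hpush, Measure.map_apply hTmeas (himgmeas E' hE' hE'S)]
    apply le_antisymm
    · have hsub2 : T ⁻¹' (T '' E') ⊆ E' ∪ Sᶜ := by
        intro x hx
        by_cases hxS : x ∈ S
        · obtain ⟨e, he, hte⟩ := hx
          exact Or.inl (hinj (hE'S he) hxS hte ▸ he)
        · exact Or.inr hxS
      calc μ (T ⁻¹' (T '' E')) ≤ μ (E' ∪ Sᶜ) := measure_mono hsub2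
        _ ≤ μ E' + μ Sᶜ := measure_union_le _ _
        _ = μ E' := by rw [hμS, add_zero]
    · exact measure_mono (Set.subset_preimage_image T E')
  -- core identity: set integrals of f and of |det|·(g∘T) agree on subsets of S
  have claimA : ∀ E' : Set E2, MeasurableSet E' → E' ⊆ S →
      ∫ x in E', f x = ∫ x in E', |(fderiv ℝ T x).det| * g (T x) := by
    intro E' hE' hE'S
    have harea := integral_image_eq_integral_abs_det_fderiv_smul volume hE'
      (fun x hx => ((hE'S hx).2.1.hasFDerivAt).hasFDerivWithinAt) (hinj.mono hE'S) g
    have hf1 : ENNReal.ofReal (∫ x in E', f x) = μ E' := by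
      rw [hμdef, withDensity_apply _ hE']
      exact ofReal_integral_eq_lintegral_ofReal hfi.integrableOn
        (Filter.Eventually.of_forall hf)
    have hg1 : ENNReal.ofReal (∫ y in T '' E', g y) = ν (T '' E') := by
      rw [hνdef, withDensity_apply _ (himgmeas E' hE' hE'S)]
      exact ofReal_integral_eq_lintegral_ofReal hgi.integrableOn
        (Filter.Eventually.of_forall hg)
    have heq1 : ENNReal.ofReal (∫ x in E', f x) = ENNReal.ofReal (∫ y in T '' E', g y) := by
      rw [hf1, hg1, hνimg E' hE' hE'S]
    have heq2 : ∫ x in E', f x = ∫ y in T '' E', g y := by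
      have hfnn : 0 ≤ ∫ x in E', f x := setIntegral_nonneg hE' fun x _ => hf x
      have hgnn : 0 ≤ ∫ y in T '' E', g y :=
        setIntegral_nonneg (himgmeas E' hE' hE'S) fun y _ => hg y
      exact (ENNReal.ofReal_eq_ofReal_iff hfnn hgnn).1 heq1
    rw [heq2, harea]
    simp [smul_eq_mul]
  -- Monge–Ampère equation a.e. on S
  have hae : ∀ᵐ x ∂(volume.restrict S), f x = |(fderiv ℝ T x).det| * g (T x) := by
    have hρint : IntegrableOn (fun x => |(fderiv ℝ T x).det| * g (T x)) S volume := by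
      have := (integrableOn_image_iff_integrableOn_abs_det_fderiv_smul volume hSmeas
        hfW hinj g).1 hgi.integrableOn
      simpa [smul_eq_mul] using this
    apply ae_eq_of_forall_setIntegral_eq_of_sigmaFinite (μ := volume.restrict S)
    · intro s hs _
      exact (hfi.restrict (s := S)).restrict
    · intro s hs _
      exact Integrable.restrict hρint
    · intro s hs _
      rw [Measure.restrict_restrict hs]
      exact claimA (s ∩ S) (hs.inter hSmeas) Set.inter_subset_right
  -- identify the determinant in the statement with fderiv of T
  have hDfd : ∀ᵐ x ∂volume, fderiv ℝ T x = D x := by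
    filter_upwards [hD] with x hx; exact hx.fderiv
  have hRHS2 : ∫ x, f x * Real.log (LinearMap.det (D x).toLinearMap)
      = ∫ x, f x * Real.log ((fderiv ℝ T x).det) := by
    apply integral_congr_ae
    filter_upwards [hDfd] with x hx
    rw [hx]
  have hdet' : Integrable (fun x => f x * Real.log ((fderiv ℝ T x).det)) := by
    apply hdet.congr
    filter_upwards [hDfd] with x hx
    rw [hx]
  -- f vanishes a.e. off S
  have hfS0 : ∀ᵐ x ∂volume, x ∉ S → f x = 0 := by
    have h1 : (∫⁻ x in Sᶜ, ENNReal.ofReal (f x) ∂volume) = 0 := by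
      rw [← withDensity_apply _ hSmeas.compl]; exact hμS
    have h2 := (lintegral_eq_zero_iff'
      (ENNReal.measurable_ofReal.comp_aemeasurable (hfi.aemeasurable.restrict))).1 h1
    rw [Filter.EventuallyEq, ae_restrict_iff' hSmeas.compl] at h2
    filter_upwards [h2] with x hx hxS
    have := hx hxS
    simp only [Function.comp_apply, Pi.zero_apply, ENNReal.ofReal_eq_zero] at this
    exact le_antisymm this (hf x)
  -- ν vanishes off T '' S, hence g vanishes a.e. there
  have hTSmeas : MeasurableSet (T '' S) := himgmeas S hSmeas (subset_refl S)
  have hν0 : ν (T '' S)ᶜ = 0 := by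
    have hν1 : ν (T '' S) = μ Set.univ := by
      rw [hνimg S hSmeas (subset_refl S)]
      have h := measure_add_measure_compl (μ := μ) hSmeas
      rw [hμS, add_zero] at h; exact h
    have hνuniv : ν Set.univ = μ Set.univ := by
      rw [← hpush, Measure.map_apply hTmeas MeasurableSet.univ, Set.preimage_univ]
    have h := measure_add_measure_compl (μ := ν) hTSmeas
    rw [hν1, hνuniv] at h
    have h' : μ Set.univ + ν (T '' S)ᶜ = μ Set.univ + 0 := by rw [add_zero]; exact h
    exact (ENNReal.add_right_inj hμfin.ne).1 h'
  have hgS0 : ∀ᵐ y ∂volume, y ∉ T '' S → g y = 0 := by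
    have h1 : (∫⁻ y in (T '' S)ᶜ, ENNReal.ofReal (g y) ∂volume) = 0 := by
      rw [← withDensity_apply _ hTSmeas.compl]; exact hν0
    have h2 := (lintegral_eq_zero_iff'
      (ENNReal.measurable_ofReal.comp_aemeasurable (hgi.aemeasurable.restrict))).1 h1
    rw [Filter.EventuallyEq, ae_restrict_iff' hTSmeas.compl] at h2
    filter_upwards [h2] with y hy hyS
    have := hy hyS
    simp only [Function.comp_apply, Pi.zero_apply, ENNReal.ofReal_eq_zero] at this
    exact le_antisymm this (hg y)
  -- splitting integrals
  have hsplit_g : ∫ y, g y * Real.log (g y) = ∫ y in T '' S, g y * Real.log (g y) := by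
    rw [← integral_add_compl hTSmeas hge]
    have hz : ∫ y in (T '' S)ᶜ, g y * Real.log (g y) = 0 := by
      apply integral_eq_zero_of_ae
      rw [Filter.EventuallyEq, ae_restrict_iff' hTSmeas.compl]
      filter_upwards [hgS0] with y hy hyc
      rw [hy hyc]; simp
    rw [hz, add_zero]
  have hsplitS : ∀ h : E2 → ℝ, Integrable h → (∀ᵐ x ∂volume, x ∉ S → h x = 0) →
      ∫ x, h x = ∫ x in S, h x := by
    intro h hint h0
    rw [← integral_add_compl hSmeas hint]
    have hz : ∫ x in Sᶜ, h x = 0 := by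
      apply integral_eq_zero_of_ae
      rw [Filter.EventuallyEq, ae_restrict_iff' hSmeas.compl]
      filter_upwards [h0] with x hx hxc
      exact hx hxc
    rw [hz, add_zero]
  -- area formula for the entropy integrand
  have harea2 : ∫ y in T '' S, g y * Real.log (g y)
      = ∫ x in S, |(fderiv ℝ T x).det| * (g (T x) * Real.log (g (T x))) := by
    have := integral_image_eq_integral_abs_det_fderiv_smul volume hSmeas hfW hinj
      (fun y => g y * Real.log (g y))
    simpa [smul_eq_mul] using this
  -- pointwise identity a.e. on S
  have hptwise : ∀ᵐ x ∂(volume.restrict S),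
      |(fderiv ℝ T x).det| * (g (T x) * Real.log (g (T x)))
        = f x * Real.log (f x) - f x * Real.log ((fderiv ℝ T x).det) := by
    have hmem : ∀ᵐ x ∂(volume.restrict S), x ∈ S := ae_restrict_mem hSmeas
    filter_upwards [hae, hmem] with x hfx hxS
    have hd : (fderiv ℝ T x).det ≠ 0 := hxS.2.2
    by_cases hgx : g (T x) = 0
    · rw [hfx, hgx]; simp
    · have hgpos : 0 < g (T x) := lt_of_le_of_ne (hg _) (Ne.symm hgx)
      have habs : (0:ℝ) < |(fderiv ℝ T x).det| := abs_pos.2 hd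
      rw [hfx, Real.log_mul habs.ne' hgpos.ne', Real.log_abs]
      ring
  -- final chain
  calc ∫ y, g y * Real.log (g y)
      = ∫ y in T '' S, g y * Real.log (g y) := hsplit_g
    _ = ∫ x in S, |(fderiv ℝ T x).det| * (g (T x) * Real.log (g (T x))) := harea2
    _ = ∫ x in S, (f x * Real.log (f x) - f x * Real.log ((fderiv ℝ T x).det)) :=
        integral_congr_ae hptwise
    _ = (∫ x in S, f x * Real.log (f x)) - ∫ x in S, f x * Real.log ((fderiv ℝ T x).det) :=
        integral_sub hfe.integrableOn hdet'.integrableOn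
    _ = (∫ x, f x * Real.log (f x)) - ∫ x, f x * Real.log ((fderiv ℝ T x).det) := by
        rw [← hsplitS _ hfe (by filter_upwards [hfS0] with x hx hxS; rw [hx hxS, zero_mul]),
          ← hsplitS _ hdet' (by filter_upwards [hfS0] with x hx hxS; rw [hx hxS, zero_mul])]
    _ = (∫ x, f x * Real.log (f x)) - ∫ x, f x * Real.log (LinearMap.det (D x).toLinearMap) := by
        rw [hRHS2]
end
end

section
/- Let (S,d) be a complete metric space, σ a Hausdorff topology on S weaker than the d-topology such that d is sequentially σ-lower semicontinuous. Let T > 0, K ⊆ S sequentially σ-compact, and u_m : [0,T] → S curves with u_m(t) ∈ K for all m, t, and limsup_m d(u_m(s), u_m(t)) ≤ w(s,t) for a symmetric function w with lim_{(s,t)→(r,r)} w(s,t) = 0 for all r outside a countable set B. Then there is a subsequence m(p) and a curve u : [0,T] → S with u_{m(p)}(t) → u(t) in σ for every t ∈ [0,T], and u is d-continuous on [0,T] \ B. -/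
open Filter
open scoped Topology

/-- A nonnegative real sequence has a subsequence tending to `atTop` or to a finite limit. -/
lemma raa_bw (f : ℕ → ℝ) (hf : ∀ p, 0 ≤ f p) :
    ∃ ψ : ℕ → ℕ, StrictMono ψ ∧
      (Tendsto (fun p => f (ψ p)) atTop atTop ∨ ∃ ℓ, Tendsto (fun p => f (ψ p)) atTop (𝓝 ℓ)) := by
  by_cases hb : ∀ c : ℝ, ∃ᶠ p in atTop, c ≤ f p
  · obtain ⟨ψ, hψ, hP⟩ := Filter.extraction_forall_of_frequently
      (P := fun n k => (n : ℝ) ≤ f k) (fun n => hb n)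
    refine ⟨ψ, hψ, Or.inl ?_⟩
    exact tendsto_atTop_mono hP tendsto_natCast_atTop_atTop
  · push_neg at hb
    obtain ⟨c, hc⟩ := hb
    obtain ⟨N, hN⟩ := eventually_atTop.mp hc
    have hmem : ∀ p, f (p + N) ∈ Set.Icc (0 : ℝ) c := by
      intro p
      have := hN (p + N) (Nat.le_add_left _ _)
      exact ⟨hf _, this.le⟩
    obtain ⟨a, -, ψ', hψ', hconv⟩ :=
      tendsto_subseq_of_bounded (Metric.isBounded_Icc (0 : ℝ) c) hmem
    refine ⟨fun p => ψ' p + N, fun i j hij => by simpa using hψ' hij, Or.inr ⟨a, hconv⟩⟩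

lemma raa_liminf_atTop {f : ℕ → ℝ} (h : Tendsto f atTop atTop) :
    Filter.liminf f atTop = 0 := by
  rw [Filter.liminf_eq]
  apply Real.sSup_of_not_bddAbove
  rintro ⟨c, hc⟩
  have hmem : (c + 1) ∈ {a : ℝ | ∀ᶠ n in atTop, a ≤ f n} := h.eventually_ge_atTop (c + 1)
  have := hc hmem
  linarith

section KL

variable {S : Type*} [MetricSpace S] (σ : TopologicalSpace S)

/-- If two σ-convergent sequences have distances tending to infinity, the limits agree. -/
lemma raa_LB
    (hlsc : ∀ (x y : ℕ → S) (a b : S),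
      Filter.Tendsto x atTop (@nhds S σ a) → Filter.Tendsto y atTop (@nhds S σ b) →
      dist a b ≤ Filter.liminf (fun m => dist (x m) (y m)) atTop)
    {x y : ℕ → S} {a b : S}
    (hx : Tendsto x atTop (@nhds S σ a)) (hy : Tendsto y atTop (@nhds S σ b))
    (hd : Tendsto (fun p => dist (x p) (y p)) atTop atTop) : a = b := by
  have h := hlsc x y a b hx hy
  rw [raa_liminf_atTop hd] at h
  exact dist_le_zero.mp h

/-- If two σ-convergent sequences have distances tending to `ℓ`, then `dist a b ≤ ℓ`. -/
lemma raa_LA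
    (hlsc : ∀ (x y : ℕ → S) (a b : S),
      Filter.Tendsto x atTop (@nhds S σ a) → Filter.Tendsto y atTop (@nhds S σ b) →
      dist a b ≤ Filter.liminf (fun m => dist (x m) (y m)) atTop)
    {x y : ℕ → S} {a b : S} {ℓ : ℝ}
    (hx : Tendsto x atTop (@nhds S σ a)) (hy : Tendsto y atTop (@nhds S σ b))
    (hd : Tendsto (fun p => dist (x p) (y p)) atTop (𝓝 ℓ)) : dist a b ≤ ℓ := by
  have h := hlsc x y a b hx hy
  rwa [hd.liminf_eq] at h

/-- Master inequality: a σ-limit along a subsequence is controlled by the (real, junk-valued)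
`limsup` of distances of the full sequence. -/
lemma raa_KL
    (hlsc : ∀ (x y : ℕ → S) (a b : S),
      Filter.Tendsto x atTop (@nhds S σ a) → Filter.Tendsto y atTop (@nhds S σ b) →
      dist a b ≤ Filter.liminf (fun m => dist (x m) (y m)) atTop)
    (T : ℝ) (K : Set S)
    (hK : ∀ x : ℕ → S, (∀ m, x m ∈ K) → ∃ a ∈ K, ∃ φ : ℕ → ℕ, StrictMono φ ∧
      Filter.Tendsto (x ∘ φ) atTop (@nhds S σ a))
    (u : ℕ → ℝ → S) (hu : ∀ m, ∀ t ∈ Set.Icc (0 : ℝ) T, u m t ∈ K)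
    {φ : ℕ → ℕ} (hφ : StrictMono φ) {s t : ℝ}
    (hs : s ∈ Set.Icc (0 : ℝ) T) (ht : t ∈ Set.Icc (0 : ℝ) T) {a b : S}
    (ha : Tendsto (fun p => u (φ p) s) atTop (@nhds S σ a))
    (hb : Tendsto (fun p => u (φ p) t) atTop (@nhds S σ b)) :
    dist a b ≤ Filter.limsup (fun m => dist (u m s) (u m t)) atTop := by
  set g : ℕ → ℝ := fun m => dist (u m s) (u m t) with hg
  by_cases hA : {c : ℝ | ∀ᶠ m in atTop, g m ≤ c}.Nonempty
  · -- full sequence eventually bounded: genuine limsup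
    rw [Filter.limsup_eq]
    apply le_csInf hA
    rintro c (hc : ∀ᶠ m in atTop, g m ≤ c)
    -- eventually, g (φ p) ≤ c
    have hgc : ∀ᶠ p in atTop, g (φ p) ≤ c := by
      obtain ⟨M, hM⟩ := eventually_atTop.mp hc
      exact eventually_atTop.mpr ⟨M, fun p hp => hM _ (le_trans hp (hφ.le_apply))⟩
    obtain ⟨ψ, hψ, hcase⟩ := raa_bw (fun p => g (φ p)) (fun p => dist_nonneg)
    rcases hcase with htop | ⟨ℓ, hℓ⟩
    · -- impossible: eventually ≤ c but → ∞
      exfalso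
      have h1 : ∀ᶠ q in atTop, c + 1 ≤ g (φ (ψ q)) := htop.eventually_ge_atTop (c + 1)
      have h2 : ∀ᶠ q in atTop, g (φ (ψ q)) ≤ c :=
        hψ.tendsto_atTop.eventually hgc
      obtain ⟨q, hq1, hq2⟩ := (h1.and h2).exists
      linarith
    · have hℓc : ℓ ≤ c := le_of_tendsto hℓ (hψ.tendsto_atTop.eventually hgc)
      have := raa_LA σ hlsc (ha.comp hψ.tendsto_atTop) (hb.comp hψ.tendsto_atTop) hℓ
      exact le_trans this hℓc
  · -- full sequence unbounded: limsup is junk 0, and we must show a = b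
    rw [Set.not_nonempty_iff_eq_empty] at hA
    have hlim0 : Filter.limsup g atTop = 0 := by
      rw [Filter.limsup_eq, hA, Real.sInf_empty]
    rw [hg] at hlim0 ⊢
    rw [hlim0]
    -- build χ with g ∘ χ → atTop
    have hfreq : ∀ n : ℕ, ∃ᶠ m in atTop, (n : ℝ) ≤ g m := by
      intro n
      by_contra hcon
      rw [Filter.not_frequently] at hcon
      have : (n : ℝ) ∈ {c : ℝ | ∀ᶠ m in atTop, g m ≤ c} := hcon.mono fun m hm => le_of_not_ge hm
      rw [hA] at this; exact this
    obtain ⟨χ, hχ, hχP⟩ := Filter.extraction_forall_of_frequently hfreq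
    have hχtop : Tendsto (fun p => g (χ p)) atTop atTop :=
      tendsto_atTop_mono hχP tendsto_natCast_atTop_atTop
    -- extract σ-limits along χ
    obtain ⟨a', -, ρ1, hρ1, ha'⟩ := hK (fun p => u (χ p) s) (fun p => hu _ _ hs)
    obtain ⟨b', -, ρ2, hρ2, hb'⟩ := hK (fun p => u (χ (ρ1 p)) t) (fun p => hu _ _ ht)
    set χ₂ : ℕ → ℕ := fun p => χ (ρ1 (ρ2 p)) with hχ₂
    have hχ₂s : Tendsto (fun p => u (χ₂ p) s) atTop (@nhds S σ a') :=
      ha'.comp hρ2.tendsto_atTop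
    have hχ₂t : Tendsto (fun p => u (χ₂ p) t) atTop (@nhds S σ b') := hb'
    have hχ₂g : Tendsto (fun p => g (χ₂ p)) atTop atTop :=
      hχtop.comp ((hρ1.comp hρ2).tendsto_atTop)
    have hab' : a' = b' := raa_LB σ hlsc hχ₂s hχ₂t hχ₂g
    -- analyze distances along φ
    obtain ⟨ψ, hψ, hcase⟩ := raa_bw (fun p => g (φ p)) (fun p => dist_nonneg)
    have has : Tendsto (fun p => u (φ (ψ p)) s) atTop (@nhds S σ a) := ha.comp hψ.tendsto_atTop
    have hbs : Tendsto (fun p => u (φ (ψ p)) t) atTop (@nhds S σ b) := hb.comp hψ.tendsto_atTop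
    rcases hcase with htop | ⟨ℓ, hℓ⟩
    · have : a = b := raa_LB σ hlsc has hbs htop
      simp [this]
    · -- compare the two subsequences
      set D : ℕ → ℝ := fun p => dist (u (φ (ψ p)) s) (u (χ₂ p) s) with hD
      obtain ⟨ρ, hρ, hDcase⟩ := raa_bw D (fun p => dist_nonneg)
      have has2 : Tendsto (fun p => u (φ (ψ (ρ p))) s) atTop (@nhds S σ a) :=
        has.comp hρ.tendsto_atTop
      have hbs2 : Tendsto (fun p => u (φ (ψ (ρ p))) t) atTop (@nhds S σ b) :=
        hbs.comp hρ.tendsto_atTop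
      have ha'2 : Tendsto (fun p => u (χ₂ (ρ p)) s) atTop (@nhds S σ a') :=
        hχ₂s.comp hρ.tendsto_atTop
      have hb'2 : Tendsto (fun p => u (χ₂ (ρ p)) t) atTop (@nhds S σ b') :=
        hχ₂t.comp hρ.tendsto_atTop
      have hg2 : Tendsto (fun p => g (χ₂ (ρ p))) atTop atTop := hχ₂g.comp hρ.tendsto_atTop
      have hℓ2 : Tendsto (fun p => g (φ (ψ (ρ p)))) atTop (𝓝 ℓ) := hℓ.comp hρ.tendsto_atTop
      have hhb : ∀ᶠ p in atTop, g (φ (ψ (ρ p))) ≤ ℓ + 1 :=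
        hℓ2.eventually_le_const (by linarith : ℓ < ℓ + 1)
      rcases hDcase with hDtop | ⟨ℓD, hℓD⟩
      · -- D → ∞ : a = a' and b = a'
        have haa' : a = a' := raa_LB σ hlsc has2 ha'2 hDtop
        have hba' : b = a' := by
          apply raa_LB σ hlsc hbs2 ha'2
          refine tendsto_atTop_mono' atTop ?_
            (tendsto_atTop_add_const_right atTop (-(ℓ + 1)) hDtop)
          filter_upwards [hhb] with p hp
          have htri : D (ρ p) ≤ g (φ (ψ (ρ p))) + dist (u (φ (ψ (ρ p))) t) (u (χ₂ (ρ p)) s) := by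
            have := dist_triangle (u (φ (ψ (ρ p))) s) (u (φ (ψ (ρ p))) t) (u (χ₂ (ρ p)) s)
            simpa [hD, hg] using this
          linarith
        rw [haa', hba']
        simp
      · -- D → ℓD : a = b' and b = b'
        have hℓD' : ∀ᶠ p in atTop, D (ρ p) ≤ ℓD + 1 :=
          hℓD.eventually_le_const (by linarith : ℓD < ℓD + 1)
        have hab'2 : a = b' := by
          apply raa_LB σ hlsc has2 hb'2
          refine tendsto_atTop_mono' atTop ?_
            (tendsto_atTop_add_const_right atTop (-(ℓD + 1)) hg2)
          filter_upwards [hℓD'] with p hp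
          have htri : g (χ₂ (ρ p)) ≤ D (ρ p) + dist (u (φ (ψ (ρ p))) s) (u (χ₂ (ρ p)) t) := by
            have := dist_triangle (u (χ₂ (ρ p)) s) (u (φ (ψ (ρ p))) s) (u (χ₂ (ρ p)) t)
            simpa [hD, hg, dist_comm] using this
          linarith
        have hbb' : b = b' := by
          apply raa_LB σ hlsc hbs2 hb'2
          refine tendsto_atTop_mono' atTop ?_
            (tendsto_atTop_add_const_right atTop (-(ℓD + 1) + -(ℓ + 1)) hg2)
          · filter_upwards [hℓD', hhb] with p hp1 hp2
            have htri : g (χ₂ (ρ p)) ≤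
                g (φ (ψ (ρ p))) + D (ρ p) + dist (u (φ (ψ (ρ p))) t) (u (χ₂ (ρ p)) t) := by
              have t1 := dist_triangle (u (χ₂ (ρ p)) s) (u (φ (ψ (ρ p))) s) (u (χ₂ (ρ p)) t)
              have t2 := dist_triangle (u (φ (ψ (ρ p))) s) (u (φ (ψ (ρ p))) t) (u (χ₂ (ρ p)) t)
              have h1 : g (χ₂ (ρ p)) ≤ D (ρ p) + dist (u (φ (ψ (ρ p))) s) (u (χ₂ (ρ p)) t) := by
                simpa [hD, hg, dist_comm] using t1
              linarith [show dist (u (φ (ψ (ρ p))) s) (u (χ₂ (ρ p)) t) ≤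
                g (φ (ψ (ρ p))) + dist (u (φ (ψ (ρ p))) t) (u (χ₂ (ρ p)) t) by
                simpa [hg] using t2]
            linarith
        rw [hab'2, hbb']
        simp

end KL


/-- **Refined Arzelà–Ascoli theorem** (Ambrosio–Gigli–Savaré, Prop. 3.3.1). Let `(S,d)` be a
complete metric space and `σ` a Hausdorff topology on `S` weaker than the `d`-topology such
that `d` is sequentially `σ`-lower semicontinuous. If curves `u_m : [0,T] → S` take values
in a sequentially `σ`-compact set `K` and satisfy
`limsup_m d(u_m(s), u_m(t)) ≤ w(s,t)` for a symmetric `w` with `w(s,t) → 0` as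
`(s,t) → (r,r)` for every `r` outside a countable set `B`, then a subsequence converges
pointwise in `σ` to a limit curve which is `d`-continuous on `[0,T] \ B`. -/
theorem refined_arzela_ascoli {S : Type*} [MetricSpace S] [CompleteSpace S]
    (σ : TopologicalSpace S) (hT2 : @T2Space S σ)
    (hweak : ∀ U : Set S, σ.IsOpen U → IsOpen U)
    (hlsc : ∀ (x y : ℕ → S) (a b : S),
      Filter.Tendsto x atTop (@nhds S σ a) → Filter.Tendsto y atTop (@nhds S σ b) →
      dist a b ≤ Filter.liminf (fun m => dist (x m) (y m)) atTop)
    (T : ℝ) (hT : 0 < T) (K : Set S)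
    (hK : ∀ x : ℕ → S, (∀ m, x m ∈ K) → ∃ a ∈ K, ∃ φ : ℕ → ℕ, StrictMono φ ∧
      Filter.Tendsto (x ∘ φ) atTop (@nhds S σ a))
    (u : ℕ → ℝ → S) (hu : ∀ m, ∀ t ∈ Set.Icc (0 : ℝ) T, u m t ∈ K)
    (w : ℝ → ℝ → ℝ) (hwsym : ∀ s t, w s t = w t s)
    (B : Set ℝ) (hB : B.Countable)
    (hw0 : ∀ r ∈ Set.Icc (0 : ℝ) T \ B,
      Filter.Tendsto (fun p : ℝ × ℝ => w p.1 p.2)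
        (𝓝[(Set.Icc (0 : ℝ) T) ×ˢ (Set.Icc (0 : ℝ) T)] (r, r)) (𝓝 0))
    (hequi : ∀ s ∈ Set.Icc (0 : ℝ) T, ∀ t ∈ Set.Icc (0 : ℝ) T,
      Filter.limsup (fun m => dist (u m s) (u m t)) atTop ≤ w s t) :
    ∃ φ : ℕ → ℕ, StrictMono φ ∧ ∃ v : ℝ → S,
      (∀ t ∈ Set.Icc (0 : ℝ) T,
        Filter.Tendsto (fun p => u (φ p) t) atTop (@nhds S σ (v t))) ∧
      ∀ r ∈ Set.Icc (0 : ℝ) T \ B, ContinuousWithinAt v (Set.Icc (0 : ℝ) T) r := by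
  classical
  -- the countable dense "grid" set D
  set D : Set ℝ := (B ∪ Set.range ((↑) : ℚ → ℝ) ∪ {0, T}) ∩ Set.Icc (0 : ℝ) T with hDdef
  have hDsub : D ⊆ Set.Icc (0 : ℝ) T := Set.inter_subset_right
  have hDcount : D.Countable :=
    Set.Countable.mono Set.inter_subset_left
      (((hB.union (Set.countable_range _)).union ((Set.countable_singleton T).insert 0)))
  have hDne : D.Nonempty :=
    ⟨0, ⟨Or.inr (Set.mem_insert 0 {T}), ⟨le_refl 0, hT.le⟩⟩⟩
  obtain ⟨e, he⟩ := hDcount.exists_eq_range hDne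
  have heD : ∀ n, e n ∈ D := fun n => he ▸ ⟨n, rfl⟩
  have heIcc : ∀ n, e n ∈ Set.Icc (0 : ℝ) T := fun n => hDsub (heD n)
  -- extraction step
  have extract : ∀ (χ : ℕ → ℕ) (n : ℕ), ∃ ψ : ℕ → ℕ, StrictMono ψ ∧
      ∃ a, Tendsto (fun p => u (χ (ψ p)) (e n)) atTop (@nhds S σ a) := by
    intro χ n
    obtain ⟨a, -, ψ, hψ, hc⟩ := hK (fun p => u (χ p) (e n)) (fun p => hu _ _ (heIcc n))
    exact ⟨ψ, hψ, a, hc⟩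
  -- iterated subsequences
  let Φ : ℕ → ℕ → ℕ := fun n => Nat.rec ((extract id 0).choose)
    (fun n Φn => Φn ∘ (extract Φn (n + 1)).choose) n
  have hΦsucc : ∀ n, Φ (n + 1) = Φ n ∘ (extract (Φ n) (n + 1)).choose := fun n => rfl
  have hΦmono : ∀ n, StrictMono (Φ n) := by
    intro n
    induction n with
    | zero => exact (extract id 0).choose_spec.1
    | succ n ih => exact ih.comp (extract (Φ n) (n + 1)).choose_spec.1
  have hΦconv : ∀ n, ∃ a, Tendsto (fun p => u (Φ n p) (e n)) atTop (@nhds S σ a) := by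
    intro n
    cases n with
    | zero =>
      obtain ⟨-, a, hc⟩ := (extract id 0).choose_spec
      exact ⟨a, hc⟩
    | succ n =>
      obtain ⟨-, a, hc⟩ := (extract (Φ n) (n + 1)).choose_spec
      exact ⟨a, hc⟩
  have hΦfactor : ∀ n m, n ≤ m → ∀ q, ∃ q', q ≤ q' ∧ Φ m q = Φ n q' := by
    intro n m hnm
    induction hnm with
    | refl => exact fun q => ⟨q, le_rfl, rfl⟩
    | @step m hm ih =>
      intro q
      obtain ⟨q', hq', heq⟩ := ih ((extract (Φ m) (m + 1)).choose q)
      exact ⟨q', le_trans (extract (Φ m) (m + 1)).choose_spec.1.le_apply hq', heq⟩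
  -- the diagonal subsequence
  set φd : ℕ → ℕ := fun p => Φ p p with hφddef
  have hφd : StrictMono φd := by
    apply strictMono_nat_of_lt_succ
    intro p
    obtain ⟨q', hq', heq⟩ := hΦfactor p (p + 1) (Nat.le_succ p) (p + 1)
    calc Φ p p < Φ p (p + 1) := hΦmono p (Nat.lt_succ_self p)
    _ ≤ Φ p q' := (hΦmono p).monotone hq'
    _ = Φ (p + 1) (p + 1) := heq.symm
  have hφdconv : ∀ n, ∃ a, Tendsto (fun p => u (φd p) (e n)) atTop (@nhds S σ a) := by
    intro n
    obtain ⟨a, ha⟩ := hΦconv n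
    refine ⟨a, ?_⟩
    have hρex : ∀ p, n ≤ p → ∃ q', p ≤ q' ∧ Φ p p = Φ n q' := fun p hp => hΦfactor n p hp p
    set ρ : ℕ → ℕ := fun p => if h : n ≤ p then (hρex p h).choose else 0 with hρdef
    have hρ1 : ∀ p, n ≤ p → p ≤ ρ p ∧ φd p = Φ n (ρ p) := by
      intro p hp
      simp only [hρdef, dif_pos hp]
      exact ⟨(hρex p hp).choose_spec.1, (hρex p hp).choose_spec.2⟩
    have hρtop : Tendsto ρ atTop atTop :=
      tendsto_atTop_mono' atTop
        (eventually_atTop.mpr ⟨n, fun p hp => (hρ1 p hp).1⟩) tendsto_id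
    refine Filter.Tendsto.congr' ?_ (ha.comp hρtop)
    filter_upwards [eventually_ge_atTop n] with p hp
    exact ((hρ1 p hp).2).symm ▸ rfl
  have hφdD : ∀ x ∈ D, ∃ a, Tendsto (fun p => u (φd p) x) atTop (@nhds S σ a) := by
    intro x hx
    rw [he] at hx
    obtain ⟨n, rfl⟩ := hx
    exact hφdconv n
  -- the limit function
  set v : ℝ → S := fun x =>
    if h : ∃ a, Tendsto (fun p => u (φd p) x) atTop (@nhds S σ a) then h.choose else u 0 0
    with hvdef
  have hv : ∀ x, (∃ a, Tendsto (fun p => u (φd p) x) atTop (@nhds S σ a)) →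
      Tendsto (fun p => u (φd p) x) atTop (@nhds S σ (v x)) := by
    intro x h
    simp only [hvdef, dif_pos h]
    exact h.choose_spec
  have hvD : ∀ x ∈ D, Tendsto (fun p => u (φd p) x) atTop (@nhds S σ (v x)) :=
    fun x hx => hv x (hφdD x hx)
  -- convergence at every point of [0,T]
  have hconv : ∀ t ∈ Set.Icc (0 : ℝ) T,
      ∃ a, Tendsto (fun p => u (φd p) t) atTop (@nhds S σ a) := by
    intro t ht
    by_cases htD : t ∈ D
    · exact hφdD t htD
    have htB : t ∉ B := fun h => htD ⟨Or.inl (Or.inl h), ht⟩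
    have ht0 : t ≠ 0 := fun h => htD ⟨Or.inr (by rw [h]; exact Set.mem_insert 0 {T}), ht⟩
    have ht0' : (0 : ℝ) < t := lt_of_le_of_ne ht.1 (Ne.symm ht0)
    -- a rational sequence increasing to t
    have hsk : ∀ k : ℕ, ∃ q : ℚ, (max 0 (t - 1 / (k + 1)) : ℝ) < q ∧ (q : ℝ) < t := by
      intro k
      apply exists_rat_btwn
      apply max_lt ht0'
      have : (0 : ℝ) < 1 / ((k : ℝ) + 1) := by positivity
      linarith
    choose q hq1 hq2 using hsk
    set sk : ℕ → ℝ := fun k => (q k : ℝ) with hskdef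
    have hskIcc : ∀ k, sk k ∈ Set.Icc (0 : ℝ) T :=
      fun k => ⟨le_of_lt (lt_of_le_of_lt (le_max_left 0 _) (hq1 k)),
        le_of_lt (lt_of_lt_of_le (hq2 k) ht.2)⟩
    have hskD : ∀ k, sk k ∈ D := fun k => ⟨Or.inl (Or.inr ⟨q k, rfl⟩), hskIcc k⟩
    have hskt : Tendsto sk atTop (𝓝 t) := by
      apply tendsto_of_tendsto_of_tendsto_of_le_of_le
        (g := fun k : ℕ => t - 1 / ((k : ℝ) + 1)) (h := fun _ : ℕ => t)
      · have h1 : Tendsto (fun k : ℕ => 1 / ((k : ℝ) + 1)) atTop (𝓝 0) :=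
          tendsto_one_div_add_atTop_nhds_zero_nat
        have h2 := (tendsto_const_nhds (x := t) (f := atTop (α := ℕ))).sub h1
        simpa using h2
      · exact tendsto_const_nhds
      · exact fun k => le_of_lt (lt_of_le_of_lt (le_max_right _ _) (hq1 k))
      · exact fun k => (hq2 k).le
    -- Cauchy property of (v (sk k))
    have hWW : Tendsto (fun kk : ℕ × ℕ => w (sk kk.1) (sk kk.2)) atTop (𝓝 0) := by
      have hF : Tendsto (fun kk : ℕ × ℕ => ((sk kk.1, sk kk.2) : ℝ × ℝ)) atTop
          (𝓝[Set.Icc (0 : ℝ) T ×ˢ Set.Icc (0 : ℝ) T] (t, t)) := by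
        rw [tendsto_nhdsWithin_iff]
        constructor
        · rw [← prod_atTop_atTop_eq]
          exact (hskt.comp tendsto_fst).prodMk_nhds (hskt.comp tendsto_snd)
        · exact Eventually.of_forall fun kk => ⟨hskIcc _, hskIcc _⟩
      exact (hw0 t ⟨ht, htB⟩).comp hF
    have hdistw : ∀ j k : ℕ, dist (v (sk j)) (v (sk k)) ≤ w (sk j) (sk k) := by
      intro j k
      exact le_trans
        (raa_KL σ hlsc T K hK u hu hφd (hskIcc j) (hskIcc k) (hvD _ (hskD j)) (hvD _ (hskD k)))
        (hequi _ (hskIcc j) _ (hskIcc k))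
    have hcauchy : CauchySeq (fun k => v (sk k)) := by
      rw [Metric.cauchySeq_iff]
      intro ε hε
      have hball : ∀ᶠ kk : ℕ × ℕ in atTop, w (sk kk.1) (sk kk.2) < ε :=
        hWW.eventually (eventually_lt_nhds hε)
      rw [Filter.eventually_atTop] at hball
      obtain ⟨⟨N1, N2⟩, hN⟩ := hball
      refine ⟨max N1 N2, fun m hm n hn => ?_⟩
      have hmn := hN (m, n) ⟨le_trans (le_max_left _ _) hm, le_trans (le_max_right _ _) hn⟩
      exact lt_of_le_of_lt (hdistw m n) hmn
    obtain ⟨β, hβ⟩ := cauchySeq_tendsto_of_complete hcauchy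
    refine ⟨β, ?_⟩
    by_contra hnc
    rw [Filter.tendsto_def] at hnc
    push_neg at hnc
    obtain ⟨U, hU, hUnot⟩ := hnc
    have hfreq : ∃ᶠ p in atTop, u (φd p) t ∉ U := Filter.not_eventually.mp hUnot
    obtain ⟨ns, hns, hnsP⟩ := Filter.extraction_of_frequently_atTop hfreq
    obtain ⟨c, -, ms, hms, hc⟩ := hK (fun i => u (φd (ns i)) t) (fun i => hu _ _ ht)
    have hχ₃ : StrictMono (fun i => φd (ns (ms i))) := hφd.comp (hns.comp hms)
    have hcconv : Tendsto (fun i => u (φd (ns (ms i))) t) atTop (@nhds S σ c) := hc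
    have hskc : ∀ k, Tendsto (fun i => u (φd (ns (ms i))) (sk k)) atTop
        (@nhds S σ (v (sk k))) :=
      fun k => (hvD _ (hskD k)).comp ((hns.comp hms).tendsto_atTop)
    have hdk : ∀ k, dist c (v (sk k)) ≤ w t (sk k) := fun k =>
      le_trans (raa_KL σ hlsc T K hK u hu hχ₃ ht (hskIcc k) hcconv (hskc k))
        (hequi t ht (sk k) (hskIcc k))
    have hw2 : Tendsto (fun k => w t (sk k)) atTop (𝓝 0) := by
      have hF : Tendsto (fun k : ℕ => ((t, sk k) : ℝ × ℝ)) atTop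
          (𝓝[Set.Icc (0 : ℝ) T ×ˢ Set.Icc (0 : ℝ) T] (t, t)) := by
        rw [tendsto_nhdsWithin_iff]
        exact ⟨tendsto_const_nhds.prodMk_nhds hskt,
          Eventually.of_forall fun k => ⟨ht, hskIcc k⟩⟩
      exact (hw0 t ⟨ht, htB⟩).comp hF
    have hdcβ : dist c β ≤ 0 := by
      have hlim : Tendsto (fun k => w t (sk k) + dist (v (sk k)) β) atTop (𝓝 0) := by
        have := hw2.add (tendsto_iff_dist_tendsto_zero.mp hβ)
        simpa using this
      refine ge_of_tendsto' hlim fun k => ?_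
      have := hdk k
      have htri := dist_triangle c (v (sk k)) β
      linarith
    have hcβ : c = β := dist_le_zero.mp hdcβ
    rw [hcβ] at hcconv
    have hev : ∀ᶠ i in atTop, u (φd (ns (ms i))) t ∈ U := hcconv hU
    obtain ⟨i, hi⟩ := hev.exists
    exact hnsP (ms i) hi
  -- the limit curve takes values in K
  have huniq : ∀ (f : ℕ → S) (a b : S), Tendsto f atTop (@nhds S σ a) →
      Tendsto f atTop (@nhds S σ b) → a = b :=
    fun f a b ha hb => @tendsto_nhds_unique S ℕ σ hT2 f atTop a b _ ha hb
  have hvK : ∀ t ∈ Set.Icc (0 : ℝ) T, v t ∈ K := by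
    intro t ht
    obtain ⟨a, haK, ψ, hψ, hc⟩ := hK (fun p => u (φd p) t) (fun p => hu _ _ ht)
    have h1 : Tendsto (fun i => u (φd (ψ i)) t) atTop (@nhds S σ (v t)) :=
      (hv t (hconv t ht)).comp hψ.tendsto_atTop
    exact (huniq _ _ _ h1 hc) ▸ haK
  -- conclusion
  refine ⟨φd, hφd, v, fun t ht => hv t (hconv t ht), ?_⟩
  intro r hr
  obtain ⟨hrI, hrB⟩ := hr
  have hvr : ∀ t' ∈ Set.Icc (0 : ℝ) T, dist (v t') (v r) ≤ w t' r := fun t' ht' =>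
    le_trans (raa_KL σ hlsc T K hK u hu hφd ht' hrI (hv t' (hconv t' ht')) (hv r (hconv r hrI)))
      (hequi t' ht' r hrI)
  have hwr : Tendsto (fun t' => w t' r) (𝓝[Set.Icc (0 : ℝ) T] r) (𝓝 0) := by
    have hF : Tendsto (fun t' : ℝ => ((t', r) : ℝ × ℝ)) (𝓝[Set.Icc (0 : ℝ) T] r)
        (𝓝[Set.Icc (0 : ℝ) T ×ˢ Set.Icc (0 : ℝ) T] (r, r)) := by
      rw [tendsto_nhdsWithin_iff]
      constructor
      · exact (tendsto_id.prodMk_nhds tendsto_const_nhds).mono_left nhdsWithin_le_nhds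
      · filter_upwards [self_mem_nhdsWithin] with t' ht'
        exact ⟨ht', hrI⟩
    exact (hw0 r ⟨hrI, hrB⟩).comp hF
  show Tendsto v (𝓝[Set.Icc (0 : ℝ) T] r) (@nhds S σ (v r))
  rw [tendsto_iff_seq_tendsto]
  intro x hx
  have hxIcc : ∀ᶠ k in atTop, x k ∈ Set.Icc (0 : ℝ) T := hx self_mem_nhdsWithin
  have hwx : Tendsto (fun k => w (x k) r) atTop (𝓝 0) := hwr.comp hx
  have hdxr : Tendsto (fun k => dist (v (x k)) (v r)) atTop (𝓝 0) := by
    apply squeeze_zero' (Eventually.of_forall fun k => dist_nonneg) ?_ hwx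
    filter_upwards [hxIcc] with k hk
    exact hvr _ hk
  by_contra hnc
  rw [Filter.tendsto_def] at hnc
  push_neg at hnc
  obtain ⟨U, hU, hUnot⟩ := hnc
  have hfreq : ∃ᶠ k in atTop, v (x k) ∉ U ∧ x k ∈ Set.Icc (0 : ℝ) T :=
    (Filter.not_eventually.mp hUnot).and_eventually hxIcc
  obtain ⟨ns, hns, hnsP⟩ := Filter.extraction_of_frequently_atTop hfreq
  obtain ⟨c, -, ms, hms, hc⟩ := hK (fun i => v (x (ns i))) (fun i => hvK _ (hnsP i).2)
  have hdc : Tendsto (fun i => dist (v (x (ns (ms i)))) (v r)) atTop (𝓝 0) :=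
    hdxr.comp ((hns.comp hms).tendsto_atTop)
  have hcvr : c = v r := by
    have hlsc' := hlsc (fun i => v (x (ns (ms i)))) (fun _ => v r) c (v r) hc
      tendsto_const_nhds
    rw [hdc.liminf_eq] at hlsc'
    exact dist_le_zero.mp hlsc'
  rw [hcvr] at hc
  have hev : ∀ᶠ i in atTop, v (x (ns (ms i))) ∈ U := hc hU
  obtain ⟨i, hi⟩ := hev.exists
  exact (hnsP (ms i)).1 hi
end

section
/- Let X ⊆ B ⊆ Y be Banach spaces with X compactly embedded in B, and B continuously embedded in Y. If a family F of functions is bounded in L²(0,T;X) and relatively compact in L²(0,T;Y), then F is relatively compact in L²(0,T;B). -/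
open MeasureTheory
open scoped ENNReal

/-- **Ehrling's lemma.** -/
theorem ehrling_aux {X B Y : Type*}
    [NormedAddCommGroup X] [NormedSpace ℝ X]
    [NormedAddCommGroup B] [NormedSpace ℝ B]
    [NormedAddCommGroup Y] [NormedSpace ℝ Y]
    (i : X →L[ℝ] B) (j : B →L[ℝ] Y) (hj_inj : Function.Injective j)
    (hi_cpt : ∀ s : Set X, Bornology.IsBounded s → IsCompact (closure (i '' s)))
    {η : ℝ} (hη : 0 < η) :
    ∃ C > 0, ∀ x : X, ‖i x‖ ≤ η * ‖x‖ + C * ‖j (i x)‖ := by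
  by_contra h
  push_neg at h
  choose x hx using fun n : ℕ => h ((n : ℝ) + 1) (by positivity)
  have hxne : ∀ n, x n ≠ 0 := by
    intro n hn
    have := hx n
    rw [hn] at this
    simp at this
  set u : ℕ → X := fun n => ‖x n‖⁻¹ • x n with hu
  have hnorm : ∀ n, ‖u n‖ = 1 := by
    intro n
    rw [hu]
    simp [norm_smul, inv_mul_cancel₀ (norm_ne_zero_iff.2 (hxne n))]
  have hineq : ∀ n : ℕ, η + ((n : ℝ) + 1) * ‖j (i (u n))‖ < ‖i (u n)‖ := by
    intro n
    have hpos : (0 : ℝ) < ‖x n‖⁻¹ := inv_pos.2 (norm_pos_iff.2 (hxne n))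
    have h1 : i (u n) = ‖x n‖⁻¹ • i (x n) := by simp [hu]
    have h2 : j (i (u n)) = ‖x n‖⁻¹ • j (i (x n)) := by simp [hu]
    rw [h2, h1, norm_smul, norm_smul]
    have := hx n
    have hxn : ‖x n‖ ≠ 0 := norm_ne_zero_iff.2 (hxne n)
    rw [Real.norm_eq_abs, abs_of_pos hpos]
    have hinv : ‖x n‖⁻¹ * ‖x n‖ = 1 := inv_mul_cancel₀ hxn
    nlinarith [this, hpos, norm_nonneg (j (i (x n))), norm_nonneg (i (x n))]
  have hjle : ∀ n, ‖j (i (u n))‖ ≤ ‖i‖ / ((n : ℝ) + 1) := by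
    intro n
    have h1 := hineq n
    have h2 : ‖i (u n)‖ ≤ ‖i‖ := by
      calc ‖i (u n)‖ ≤ ‖i‖ * ‖u n‖ := i.le_opNorm _
      _ = ‖i‖ := by rw [hnorm n, mul_one]
    have hn1 : (0 : ℝ) < (n : ℝ) + 1 := by positivity
    rw [le_div_iff₀ hn1]
    nlinarith [h1, h2, hη]
  have hjz : Filter.Tendsto (fun n => j (i (u n))) Filter.atTop (nhds 0) := by
    apply squeeze_zero_norm hjle
    have : Filter.Tendsto (fun n : ℕ => ((n : ℝ) + 1)) Filter.atTop Filter.atTop :=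
      Filter.tendsto_atTop_add_const_right _ 1 tendsto_natCast_atTop_atTop
    exact Filter.Tendsto.div_atTop tendsto_const_nhds this
  -- compactness
  have hK : IsCompact (closure (i '' Metric.closedBall 0 1)) :=
    hi_cpt _ Metric.isBounded_closedBall
  have hmem : ∀ n, i (u n) ∈ closure (i '' Metric.closedBall 0 1) := by
    intro n
    apply subset_closure
    exact Set.mem_image_of_mem _ (by simp [Metric.mem_closedBall, hnorm n])
  obtain ⟨b, _, φ, hφ, hconv⟩ := hK.tendsto_subseq hmem
  have hjb : j b = 0 := by
    have h1 : Filter.Tendsto (fun n => j (i (u (φ n)))) Filter.atTop (nhds (j b)) :=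
      (j.continuous.tendsto b).comp hconv
    have h2 : Filter.Tendsto (fun n => j (i (u (φ n)))) Filter.atTop (nhds 0) :=
      hjz.comp hφ.tendsto_atTop
    exact tendsto_nhds_unique h1 h2
  have hb0 : b = 0 := hj_inj (by simpa using hjb)
  have hbη : η ≤ ‖b‖ := by
    have h1 : Filter.Tendsto (fun n => ‖i (u (φ n))‖) Filter.atTop (nhds ‖b‖) :=
      (continuous_norm.tendsto b).comp hconv
    apply le_of_tendsto_of_tendsto tendsto_const_nhds h1
    filter_upwards with n
    have := hineq (φ n)
    have := mul_nonneg (by positivity : (0:ℝ) ≤ ((φ n : ℝ) + 1)) (norm_nonneg (j (i (u (φ n)))))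
    linarith
  rw [hb0] at hbη
  simp at hbη
  linarith

/-- Lp version of Ehrling's inequality. -/
theorem lp_ehrling {α : Type*} [MeasurableSpace α] (μ : Measure α)
    {X B Y : Type*}
    [NormedAddCommGroup X] [NormedSpace ℝ X]
    [NormedAddCommGroup B] [NormedSpace ℝ B]
    [NormedAddCommGroup Y] [NormedSpace ℝ Y]
    (i : X →L[ℝ] B) (j : B →L[ℝ] Y) {η C : ℝ} (hη : 0 ≤ η) (hC : 0 ≤ C)
    (hpt : ∀ x : X, ‖i x‖ ≤ η * ‖x‖ + C * ‖j (i x)‖)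
    (f : Lp X 2 μ) :
    ‖ContinuousLinearMap.compLp i f‖ ≤ η * ‖f‖ + C * ‖ContinuousLinearMap.compLp (j.comp i) f‖ := by
  have hfm := Lp.aestronglyMeasurable f
  have hjif : AEStronglyMeasurable (fun t => j (i (f t))) μ :=
    (j.comp i).continuous.comp_aestronglyMeasurable hfm
  set g1 : α → ℝ := fun t => η * ‖f t‖ with hg1def
  set g2 : α → ℝ := fun t => C * ‖j (i (f t))‖ with hg2def
  have hg1m : AEStronglyMeasurable g1 μ := aestronglyMeasurable_const.mul hfm.norm
  have hg2m : AEStronglyMeasurable g2 μ := aestronglyMeasurable_const.mul hjif.norm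
  have key : eLpNorm (fun t => i (f t)) 2 μ ≤ eLpNorm g1 2 μ + eLpNorm g2 2 μ := by
    refine le_trans (eLpNorm_mono_ae (g := g1 + g2) ?_) (eLpNorm_add_le (p := 2) hg1m hg2m one_le_two)
    filter_upwards with t
    have h1 : 0 ≤ g1 t + g2 t := by
      have := norm_nonneg (f t); have := norm_nonneg (j (i (f t)))
      simp only [hg1def, hg2def]; positivity
    calc ‖i (f t)‖ ≤ g1 t + g2 t := hpt (f t)
    _ = ‖(g1 + g2) t‖ := by rw [Pi.add_apply, Real.norm_eq_abs, abs_of_nonneg h1]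
  have hg1e : eLpNorm g1 2 μ = ‖η‖₊ * eLpNorm f 2 μ := by
    have : g1 = η • (fun t => ‖f t‖) := rfl
    rw [this, eLpNorm_const_smul, eLpNorm_norm, enorm_eq_nnnorm]
  have hg2e : eLpNorm g2 2 μ = ‖C‖₊ * eLpNorm (fun t => j (i (f t))) 2 μ := by
    have : g2 = C • (fun t => ‖j (i (f t))‖) := rfl
    rw [this, eLpNorm_const_smul, eLpNorm_norm, enorm_eq_nnnorm]
  have hjife : eLpNorm (fun t => j (i (f t))) 2 μ
      = eLpNorm (ContinuousLinearMap.compLp (j.comp i) f) 2 μ := by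
    refine eLpNorm_congr_ae ?_
    filter_upwards [(j.comp i).coeFn_compLp' f] with t ht
    simp [ht]
  have hfin1 : eLpNorm f 2 μ ≠ ∞ := (Lp.memLp f).2.ne
  have hfin2 : eLpNorm (ContinuousLinearMap.compLp (j.comp i) f) 2 μ ≠ ∞ :=
    (Lp.memLp _).2.ne
  rw [Lp.norm_def, Lp.norm_def, Lp.norm_def,
    eLpNorm_congr_ae (i.coeFn_compLp' f)]
  calc (eLpNorm (fun t => i (f t)) 2 μ).toReal
      ≤ (eLpNorm g1 2 μ + eLpNorm g2 2 μ).toReal := by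
        apply ENNReal.toReal_mono _ key
        rw [hg1e, hg2e, hjife]
        exact ENNReal.add_ne_top.2 ⟨ENNReal.mul_ne_top ENNReal.coe_ne_top hfin1,
          ENNReal.mul_ne_top ENNReal.coe_ne_top hfin2⟩
    _ = η * (eLpNorm f 2 μ).toReal
        + C * (eLpNorm (ContinuousLinearMap.compLp (j.comp i) f) 2 μ).toReal := by
        rw [hg1e, hg2e, hjife, ENNReal.toReal_add, ENNReal.toReal_mul, ENNReal.toReal_mul]
        · simp [Real.norm_of_nonneg hη, Real.norm_of_nonneg hC]
        · exact ENNReal.mul_ne_top ENNReal.coe_ne_top hfin1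
        · exact ENNReal.mul_ne_top ENNReal.coe_ne_top hfin2

theorem compLp_sub {α : Type*} [MeasurableSpace α] {μ : Measure α}
    {X B : Type*}
    [NormedAddCommGroup X] [NormedSpace ℝ X]
    [NormedAddCommGroup B] [NormedSpace ℝ B]
    (i : X →L[ℝ] B) (f g : Lp X 2 μ) :
    ContinuousLinearMap.compLp i (f - g)
      = ContinuousLinearMap.compLp i f - ContinuousLinearMap.compLp i g :=
  map_sub (ContinuousLinearMap.compLpₗ 2 μ i) f g

/-- **Simon's compactness lemma in `L²(0,T;·)`.** Let `X ⊆ B ⊆ Y` be Banach spaces, with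
`X` compactly embedded in `B` (via `i`) and `B` continuously embedded in `Y` (via `j`).
If a family `F ⊆ L²(0,T;X)` is bounded in `L²(0,T;X)` and relatively compact in
`L²(0,T;Y)`, then it is relatively compact in `L²(0,T;B)`. -/
theorem simon_compactness {X B Y : Type*}
    [NormedAddCommGroup X] [NormedSpace ℝ X] [CompleteSpace X]
    [NormedAddCommGroup B] [NormedSpace ℝ B] [CompleteSpace B]
    [NormedAddCommGroup Y] [NormedSpace ℝ Y] [CompleteSpace Y]
    (i : X →L[ℝ] B) (j : B →L[ℝ] Y)
    (hi_inj : Function.Injective i) (hj_inj : Function.Injective j)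
    (hi_cpt : ∀ s : Set X, Bornology.IsBounded s → IsCompact (closure (i '' s)))
    (T : ℝ) (hT : 0 < T)
    (F : Set (Lp X 2 (volume.restrict (Set.Ioo (0 : ℝ) T))))
    (hFbdd : Bornology.IsBounded F)
    (hFY : IsCompact (closure
      ((fun f => ContinuousLinearMap.compLp (j.comp i) f) '' F))) :
    IsCompact (closure ((fun f => ContinuousLinearMap.compLp i f) '' F)) := by
  apply TotallyBounded.isCompact_of_isClosed _ isClosed_closure
  rw [totallyBounded_closure, Metric.totallyBounded_iff]
  intro ε hε
  obtain ⟨M₀, hM₀⟩ := isBounded_iff_forall_norm_le.1 hFbdd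
  set M : ℝ := max M₀ 0 with hMdef
  have hM : ∀ f ∈ F, ‖f‖ ≤ M := fun f hf => (hM₀ f hf).trans (le_max_left _ _)
  have hMnn : 0 ≤ M := le_max_right _ _
  have hηpos : 0 < ε / (4 * (M + 1)) := by positivity
  obtain ⟨C, hCpos, hEhr⟩ := ehrling_aux i j hj_inj hi_cpt hηpos
  set η : ℝ := ε / (4 * (M + 1)) with hηdef
  set δ : ℝ := ε / (4 * (C + 1)) with hδdef
  have hδpos : 0 < δ := by positivity
  have hTB : TotallyBounded ((fun f => ContinuousLinearMap.compLp (j.comp i) f) '' F) :=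
    hFY.totallyBounded.subset subset_closure
  obtain ⟨t, htsub, htfin, htcov⟩ :=
    totallyBounded_iff_subset.1 hTB _ (Metric.dist_mem_uniformity hδpos)
  have hchoice : ∀ y ∈ t, ∃ f ∈ F, ContinuousLinearMap.compLp (j.comp i) f = y := by
    intro y hy
    obtain ⟨f, hf, hfy⟩ := htsub hy
    exact ⟨f, hf, hfy⟩
  choose! g hgF hgy using hchoice
  refine ⟨(fun y => ContinuousLinearMap.compLp i (g y)) '' t, htfin.image _, ?_⟩
  rintro z ⟨f, hf, rfl⟩
  have hfy := htcov (Set.mem_image_of_mem _ hf)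
  rw [Set.mem_iUnion₂] at hfy
  obtain ⟨y, hyt, hyd⟩ := hfy
  simp only [Set.mem_setOf_eq] at hyd
  rw [Set.mem_iUnion₂]
  refine ⟨ContinuousLinearMap.compLp i (g y), Set.mem_image_of_mem _ hyt, ?_⟩
  rw [Metric.mem_ball, dist_eq_norm, ← compLp_sub]
  have hbound := lp_ehrling (volume.restrict (Set.Ioo (0 : ℝ) T)) i j hηpos.le hCpos.le hEhr (f - g y)
  rw [compLp_sub (j.comp i)] at hbound
  have h1 : ‖f - g y‖ ≤ 2 * M := by
    calc ‖f - g y‖ ≤ ‖f‖ + ‖g y‖ := norm_sub_le _ _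
    _ ≤ M + M := add_le_add (hM f hf) (hM _ (hgF y hyt))
    _ = 2 * M := by ring
  have h2 : ‖ContinuousLinearMap.compLp (j.comp i) f
      - ContinuousLinearMap.compLp (j.comp i) (g y)‖ < δ := by
    rw [hgy y hyt]
    rw [dist_eq_norm] at hyd
    exact hyd
  have hnn : 0 ≤ ‖ContinuousLinearMap.compLp (j.comp i) f
      - ContinuousLinearMap.compLp (j.comp i) (g y)‖ := norm_nonneg _
  have hfg : 0 ≤ ‖f - g y‖ := norm_nonneg _
  have hη2 : η * ‖f - g y‖ ≤ η * (2 * M) := by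
    exact mul_le_mul_of_nonneg_left h1 hηpos.le
  have hC2 : C * ‖ContinuousLinearMap.compLp (j.comp i) f
      - ContinuousLinearMap.compLp (j.comp i) (g y)‖ < C * δ :=
    (mul_lt_mul_iff_right₀ hCpos).2 h2
  have hA : η * (2 * M) ≤ ε / 2 := by
    rw [hηdef]
    rw [div_mul_eq_mul_div, div_le_div_iff₀ (by positivity) (by norm_num)]
    nlinarith
  have hB : C * δ < ε / 2 := by
    rw [hδdef, ← mul_div_assoc, div_lt_div_iff₀ (by positivity) (by norm_num)]
    nlinarith
  linarith
end

section
/- Let ρ ∈ L¹₊(ℝ²) with ∫ ρ = β > 0, finite entropy and finite second moment, and let u(x) = −(1/2π)∫ ln|x−y| ρ(y) dy be its Newtonian potential. Then there exist constants C > 0 and R₀ > 0 (depending only on bounds for the entropy and second moment of ρ) such that |u(x) + (β/2π) ln|x|| ≤ C for all |x| ≥ R₀. -/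
open MeasureTheory Real
open scoped ENNReal

open Metric Set Filter in
private lemma aux_integrableOn_rpow :
    IntegrableOn (fun z : EuclideanSpace ℝ (Fin 2) => ‖z‖ ^ (-(3/4 : ℝ)))
      (ball (0 : EuclideanSpace ℝ (Fin 2)) 1) volume := by
  have hmeas : Measurable fun z : EuclideanSpace ℝ (Fin 2) => ‖z‖ ^ (-(3/4 : ℝ)) := by fun_prop
  constructor
  · exact (hmeas.aestronglyMeasurable).restrict
  · rw [HasFiniteIntegral]
    have hnn : ∀ z : EuclideanSpace ℝ (Fin 2), 0 ≤ ‖z‖ ^ (-(3/4 : ℝ)) :=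
      fun z => rpow_nonneg (norm_nonneg _) _
    have hcalc : ∀ z : EuclideanSpace ℝ (Fin 2), ‖(‖z‖ ^ (-(3/4 : ℝ)))‖ₑ
        = ENNReal.ofReal (‖z‖ ^ (-(3/4 : ℝ))) := fun z => by
      rw [← ofReal_norm, Real.norm_of_nonneg (hnn z)]
    simp_rw [hcalc]
    rw [lintegral_eq_lintegral_meas_le _ (Eventually.of_forall hnn)
      (hmeas.aemeasurable.restrict)]
    have hlev : ∀ t : ℝ, 0 < t →
        (volume.restrict (ball (0 : EuclideanSpace ℝ (Fin 2)) 1))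
            {a : EuclideanSpace ℝ (Fin 2) | t ≤ ‖a‖ ^ (-(3/4 : ℝ))}
          ≤ min (volume (ball (0 : EuclideanSpace ℝ (Fin 2)) 1))
            (volume (closedBall (0 : EuclideanSpace ℝ (Fin 2)) (t ^ (-(4/3) : ℝ)))) := by
      intro t ht
      refine le_min ?_ (le_trans (Measure.restrict_apply_le _ _) (measure_mono ?_))
      · calc (volume.restrict (ball (0 : EuclideanSpace ℝ (Fin 2)) 1))
              {a : EuclideanSpace ℝ (Fin 2) | t ≤ ‖a‖ ^ (-(3/4 : ℝ))}
            ≤ (volume.restrict (ball (0 : EuclideanSpace ℝ (Fin 2)) 1)) univ :=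
              measure_mono (subset_univ _)
          _ = volume (ball (0 : EuclideanSpace ℝ (Fin 2)) 1) := by
              rw [Measure.restrict_apply_univ]
      · intro a ha
        simp only [mem_setOf_eq] at ha
        rcases eq_or_ne a 0 with rfl | h0
        · simp only [norm_zero] at ha
          rw [Real.zero_rpow (by norm_num)] at ha
          linarith
        · have hna : 0 < ‖a‖ := norm_pos_iff.mpr h0
          rw [mem_closedBall_zero_iff]
          have h2 : (‖a‖ ^ (-(3/4 : ℝ))) ^ (-(4/3) : ℝ) ≤ t ^ (-(4/3) : ℝ) :=
            Real.rpow_le_rpow_of_nonpos ht ha (by norm_num)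
          calc ‖a‖ = (‖a‖ ^ (-(3/4 : ℝ))) ^ (-(4/3) : ℝ) := by
                rw [← Real.rpow_mul hna.le]
                norm_num
            _ ≤ t ^ (-(4/3) : ℝ) := h2
    calc ∫⁻ t in Ioi (0:ℝ), (volume.restrict (ball (0 : EuclideanSpace ℝ (Fin 2)) 1))
            {a : EuclideanSpace ℝ (Fin 2) | t ≤ ‖a‖ ^ (-(3/4 : ℝ))}
        ≤ ∫⁻ t in Ioi (0:ℝ), min (volume (ball (0 : EuclideanSpace ℝ (Fin 2)) 1))
            (volume (closedBall (0 : EuclideanSpace ℝ (Fin 2)) (t ^ (-(4/3) : ℝ)))) := by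
          refine setLIntegral_mono' measurableSet_Ioi fun t ht => hlev t ht
      _ ≤ (∫⁻ t in Ioc (0:ℝ) 1, min (volume (ball (0 : EuclideanSpace ℝ (Fin 2)) 1))
            (volume (closedBall (0 : EuclideanSpace ℝ (Fin 2)) (t ^ (-(4/3) : ℝ)))))
          + ∫⁻ t in Ioi (1:ℝ), min (volume (ball (0 : EuclideanSpace ℝ (Fin 2)) 1))
            (volume (closedBall (0 : EuclideanSpace ℝ (Fin 2)) (t ^ (-(4/3) : ℝ)))) := by
          rw [← lintegral_union measurableSet_Ioi (Ioc_disjoint_Ioi le_rfl)]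
          exact lintegral_mono_set Ioi_subset_Ioc_union_Ioi
      _ < ∞ := by
          refine ENNReal.add_lt_top.2 ⟨?_, ?_⟩
          · calc (∫⁻ t in Ioc (0:ℝ) 1, min (volume (ball (0 : EuclideanSpace ℝ (Fin 2)) 1))
                  (volume (closedBall (0 : EuclideanSpace ℝ (Fin 2)) (t ^ (-(4/3) : ℝ)))))
                ≤ ∫⁻ _ in Ioc (0:ℝ) 1, volume (ball (0 : EuclideanSpace ℝ (Fin 2)) 1) :=
                  setLIntegral_mono' measurableSet_Ioc fun t _ => min_le_left _ _
              _ < ∞ := by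
                  rw [setLIntegral_const]
                  exact ENNReal.mul_lt_top measure_ball_lt_top (by simp [Real.volume_Ioc])
          · have key : ∀ t ∈ Ioi (1:ℝ), min (volume (ball (0 : EuclideanSpace ℝ (Fin 2)) 1))
                (volume (closedBall (0 : EuclideanSpace ℝ (Fin 2)) (t ^ (-(4/3) : ℝ))))
                ≤ ENNReal.ofReal (t ^ (-(8/3) : ℝ))
                  * volume (closedBall (0 : EuclideanSpace ℝ (Fin 2)) 1) := by
              intro t ht
              have ht0 : (0:ℝ) < t := lt_trans zero_lt_one ht
              refine le_trans (min_le_right _ _) ?_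
              rw [(volume : Measure (EuclideanSpace ℝ (Fin 2))).addHaar_closedBall
                (0 : EuclideanSpace ℝ (Fin 2)) (by positivity)]
              have : (t ^ (-(4/3) : ℝ)) ^ (Module.finrank ℝ (EuclideanSpace ℝ (Fin 2)))
                  = t ^ (-(8/3) : ℝ) := by
                rw [finrank_euclideanSpace_fin, ← Real.rpow_natCast (t ^ (-(4/3) : ℝ)) 2,
                  ← Real.rpow_mul ht0.le]
                norm_num
              rw [this]
              exact mul_le_mul_right (measure_mono ball_subset_closedBall) _
            calc (∫⁻ t in Ioi (1:ℝ), min (volume (ball (0 : EuclideanSpace ℝ (Fin 2)) 1))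
                  (volume (closedBall (0 : EuclideanSpace ℝ (Fin 2)) (t ^ (-(4/3) : ℝ)))))
                ≤ ∫⁻ t in Ioi (1:ℝ), ENNReal.ofReal (t ^ (-(8/3) : ℝ))
                    * volume (closedBall (0 : EuclideanSpace ℝ (Fin 2)) 1) :=
                  setLIntegral_mono' measurableSet_Ioi key
              _ = (∫⁻ t in Ioi (1:ℝ), ENNReal.ofReal (t ^ (-(8/3) : ℝ)))
                    * volume (closedBall (0 : EuclideanSpace ℝ (Fin 2)) 1) := by
                  rw [lintegral_mul_const' _ _ measure_closedBall_lt_top.ne]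
              _ < ∞ := by
                  refine ENNReal.mul_lt_top ?_ measure_closedBall_lt_top
                  exact (integrableOn_Ioi_rpow_of_lt (by norm_num)
                    zero_lt_one).setLIntegral_lt_top

private lemma aux_neg_log_le {s : ℝ} (hs : 0 < s) : -Real.log s ≤ 4 * s ^ (-(1/4) : ℝ) := by
  have h1 : Real.log (s ^ (-(1/4) : ℝ)) = (-(1/4) : ℝ) * Real.log s := Real.log_rpow hs _
  have h2 : Real.log (s ^ (-(1/4) : ℝ)) ≤ s ^ (-(1/4) : ℝ) - 1 :=
    Real.log_le_sub_one_of_pos (Real.rpow_pos_of_pos hs _)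
  nlinarith [Real.rpow_pos_of_pos hs (-(1/4) : ℝ)]

open Metric Set in
private lemma aux_pointwise (x y : EuclideanSpace ℝ (Fin 2)) (hx : 2 ≤ ‖x‖) (hxy : y ≠ x)
    (r : ℝ) (hr : 0 ≤ r) :
    |(Real.log ‖x‖ - Real.log ‖x - y‖) * r| ≤
      5 * ((1 + ‖y‖ ^ 2) * r) + 2 * (r * |Real.log r|) +
        Set.indicator (ball x 1) (fun y => 4 * ‖x - y‖ ^ (-(3/4) : ℝ)) y := by
  have hx0 : (0:ℝ) < ‖x‖ := by linarith
  have hs0 : (0:ℝ) < ‖x - y‖ := norm_pos_iff.mpr (sub_ne_zero.mpr (Ne.symm hxy))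
  have hentnn : 0 ≤ r * |Real.log r| := mul_nonneg hr (abs_nonneg _)
  by_cases hcase : 1 ≤ ‖x - y‖
  · -- far from the singularity
    have hmem : y ∉ ball x 1 := by
      rw [mem_ball, dist_eq_norm, norm_sub_rev]
      exact not_lt.mpr hcase
    rw [Set.indicator_of_notMem hmem]
    have hxle : ‖x‖ ≤ ‖x - y‖ + ‖y‖ := by
      calc ‖x‖ = ‖(x - y) + y‖ := by rw [sub_add_cancel]
        _ ≤ ‖x - y‖ + ‖y‖ := norm_add_le _ _
    have hsle : ‖x - y‖ ≤ ‖x‖ + ‖y‖ := norm_sub_le _ _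
    have habs : |Real.log ‖x‖ - Real.log ‖x - y‖| ≤ ‖y‖ := by
      rw [abs_sub_le_iff]
      constructor
      · have l1 : Real.log ‖x‖ ≤ Real.log (‖x - y‖ + ‖y‖) :=
          Real.log_le_log hx0 hxle
        have l2 : Real.log (‖x - y‖ + ‖y‖) - Real.log ‖x - y‖
            = Real.log ((‖x - y‖ + ‖y‖) / ‖x - y‖) := by
          rw [Real.log_div (by positivity) hs0.ne']
        have l3 : Real.log ((‖x - y‖ + ‖y‖) / ‖x - y‖) ≤ (‖x - y‖ + ‖y‖) / ‖x - y‖ - 1 :=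
          Real.log_le_sub_one_of_pos (by positivity)
        have l4 : (‖x - y‖ + ‖y‖) / ‖x - y‖ - 1 = ‖y‖ / ‖x - y‖ := by field_simp; ring
        have l5 : ‖y‖ / ‖x - y‖ ≤ ‖y‖ := by
          apply div_le_self (norm_nonneg _) hcase
        linarith
      · have l1 : Real.log ‖x - y‖ ≤ Real.log (‖x‖ + ‖y‖) :=
          Real.log_le_log hs0 hsle
        have l2 : Real.log (‖x‖ + ‖y‖) - Real.log ‖x‖
            = Real.log ((‖x‖ + ‖y‖) / ‖x‖) := by
          rw [Real.log_div (by positivity) hx0.ne']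
        have l3 : Real.log ((‖x‖ + ‖y‖) / ‖x‖) ≤ (‖x‖ + ‖y‖) / ‖x‖ - 1 :=
          Real.log_le_sub_one_of_pos (by positivity)
        have l4 : (‖x‖ + ‖y‖) / ‖x‖ - 1 = ‖y‖ / ‖x‖ := by field_simp; ring
        have l5 : ‖y‖ / ‖x‖ ≤ ‖y‖ := div_le_self (norm_nonneg _) (by linarith)
        linarith
    rw [abs_mul, abs_of_nonneg hr]
    have hyy : ‖y‖ ≤ 1 + ‖y‖ ^ 2 := by nlinarith [sq_nonneg (‖y‖ - 1)]
    have h5 : |Real.log ‖x‖ - Real.log ‖x - y‖| * r ≤ (1 + ‖y‖ ^ 2) * r :=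
      mul_le_mul_of_nonneg_right (le_trans habs hyy) hr
    have hpos : 0 ≤ (1 + ‖y‖ ^ 2) * r := by positivity
    linarith
  · -- near the singularity
    push_neg at hcase
    have hmem : y ∈ ball x 1 := by
      rw [mem_ball, dist_eq_norm, norm_sub_rev]
      exact hcase
    rw [Set.indicator_of_mem hmem]
    have hlogx : 0 ≤ Real.log ‖x‖ := Real.log_nonneg (by linarith)
    have hlogs : Real.log ‖x - y‖ ≤ 0 := Real.log_nonpos hs0.le hcase.le
    have hrp : (0:ℝ) < 4 * ‖x - y‖ ^ (-(3/4) : ℝ) := by positivity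
    -- bound on log ‖x‖ * r
    have hy2 : ‖x‖ ≤ 2 * ‖y‖ := by
      have hxle : ‖x‖ ≤ ‖x - y‖ + ‖y‖ := by
        calc ‖x‖ = ‖(x - y) + y‖ := by rw [sub_add_cancel]
          _ ≤ ‖x - y‖ + ‖y‖ := norm_add_le _ _
      linarith
    have hb1 : Real.log ‖x‖ ≤ 5 * (1 + ‖y‖ ^ 2) := by
      have := Real.log_le_sub_one_of_pos hx0
      nlinarith [sq_nonneg (‖y‖ - 1), norm_nonneg y]
    have hb1r : Real.log ‖x‖ * r ≤ 5 * ((1 + ‖y‖ ^ 2) * r) := by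
      have := mul_le_mul_of_nonneg_right hb1 hr
      linarith
    -- bound on (- log ‖x - y‖) * r
    have hb2 : (-Real.log ‖x - y‖) * r ≤ 2 * (r * |Real.log r|) + 4 * ‖x - y‖ ^ (-(3/4) : ℝ) := by
      by_cases hrs : r ≤ ‖x - y‖ ^ (-(1/2) : ℝ)
      · have l1 : (-Real.log ‖x - y‖) * r ≤ (-Real.log ‖x - y‖) * ‖x - y‖ ^ (-(1/2) : ℝ) :=
          mul_le_mul_of_nonneg_left hrs (by linarith)
        have l2 : (-Real.log ‖x - y‖) * ‖x - y‖ ^ (-(1/2) : ℝ)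
            ≤ (4 * ‖x - y‖ ^ (-(1/4) : ℝ)) * ‖x - y‖ ^ (-(1/2) : ℝ) :=
          mul_le_mul_of_nonneg_right (aux_neg_log_le hs0)
            (Real.rpow_nonneg (norm_nonneg _) _)
        have l3 : (4 * ‖x - y‖ ^ (-(1/4) : ℝ)) * ‖x - y‖ ^ (-(1/2) : ℝ)
            = 4 * ‖x - y‖ ^ (-(3/4) : ℝ) := by
          rw [mul_assoc, ← Real.rpow_add hs0]
          norm_num
        linarith
      · push_neg at hrs
        have hs2 : (1:ℝ) ≤ ‖x - y‖ ^ (-(1/2) : ℝ) :=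
          Real.one_le_rpow_of_pos_of_le_one_of_nonpos hs0 hcase.le (by norm_num)
        have hr1 : (1:ℝ) ≤ r := le_trans hs2 hrs.le
        have hlogr : (-(1/2) : ℝ) * Real.log ‖x - y‖ ≤ Real.log r := by
          have := Real.log_le_log (Real.rpow_pos_of_pos hs0 _) hrs.le
          rwa [Real.log_rpow hs0] at this
        have habs : |Real.log r| = Real.log r := abs_of_nonneg (Real.log_nonneg hr1)
        have l1 : -Real.log ‖x - y‖ ≤ 2 * |Real.log r| := by
          rw [habs]; linarith
        have l2 : (-Real.log ‖x - y‖) * r ≤ (2 * |Real.log r|) * r :=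
          mul_le_mul_of_nonneg_right l1 hr
        nlinarith
    have heq : |(Real.log ‖x‖ - Real.log ‖x - y‖) * r|
        = Real.log ‖x‖ * r + (-Real.log ‖x - y‖) * r := by
      rw [abs_of_nonneg (mul_nonneg (by linarith) hr)]
      ring
    rw [heq]
    linarith

/-- **Logarithmic asymptotics of the planar Newtonian potential** (Chen–Li type estimate).
For every bound `A > 0` there exist `C > 0` and `R₀ > 0` such that for every nonnegative
density `ρ` on `ℝ²` of mass `β ∈ (0, A]` with entropy `∫ ρ|ln ρ| ≤ A` and second moment
`∫ |x|²ρ ≤ A`, its Newtonian potential `u(x) = −(1/2π)∫ ln|x−y| ρ(y) dy` satisfies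
`|u(x) + (β/2π) ln|x|| ≤ C` for all `|x| ≥ R₀`. -/
theorem newtonian_potential_log_decay :
    ∀ A : ℝ, 0 < A → ∃ C : ℝ, 0 < C ∧ ∃ R₀ : ℝ, 0 < R₀ ∧
      ∀ (ρ : EuclideanSpace ℝ (Fin 2) → ℝ) (β : ℝ),
        (∀ x, 0 ≤ ρ x) → Integrable ρ → (∫ x, ρ x) = β → 0 < β → β ≤ A →
        Integrable (fun x => ρ x * |Real.log (ρ x)|) →
        (∫ x, ρ x * |Real.log (ρ x)|) ≤ A →
        Integrable (fun x => ‖x‖ ^ 2 * ρ x) → (∫ x, ‖x‖ ^ 2 * ρ x) ≤ A →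
        ∀ x : EuclideanSpace ℝ (Fin 2), R₀ ≤ ‖x‖ →
          |(-(1 / (2 * π)) * ∫ y, Real.log ‖x - y‖ * ρ y) + (β / (2 * π)) * Real.log ‖x‖|
            ≤ C := by
  intro A hA
  set K : ℝ := ∫ z in Metric.ball (0 : EuclideanSpace ℝ (Fin 2)) 1, 4 * ‖z‖ ^ (-(3/4) : ℝ)
    with hKdef
  have hK0 : 0 ≤ K :=
    setIntegral_nonneg measurableSet_ball fun z _ => by positivity
  have hπ : (0:ℝ) < π := Real.pi_pos
  refine ⟨(12 * A + K) / (2 * π), by positivity, 2, two_pos, ?_⟩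
  intro ρ β hρ0 hρint hβ hβpos hβA hent hentA hmom hmomA x hxnorm
  -- the translated indicator function
  set g : EuclideanSpace ℝ (Fin 2) → ℝ :=
    Set.indicator (Metric.ball (0 : EuclideanSpace ℝ (Fin 2)) 1)
      (fun z => 4 * ‖z‖ ^ (-(3/4) : ℝ)) with hgdef
  have hgint : Integrable g :=
    (integrable_indicator_iff measurableSet_ball).mpr (aux_integrableOn_rpow.const_mul 4)
  have hgval : (∫ z, g z) = K := by
    rw [hgdef, integral_indicator measurableSet_ball]
  have hcomp : ∀ y, Set.indicator (Metric.ball x 1)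
      (fun y => 4 * ‖x - y‖ ^ (-(3/4) : ℝ)) y = g (x - y) := by
    intro y
    by_cases h : y ∈ Metric.ball x 1
    · rw [Set.indicator_of_mem h, hgdef, Set.indicator_of_mem]
      rw [Metric.mem_ball, dist_eq_norm] at h
      rw [mem_ball_zero_iff]
      rwa [norm_sub_rev] at h
    · rw [Set.indicator_of_notMem h, hgdef, Set.indicator_of_notMem]
      rw [Metric.mem_ball, dist_eq_norm] at h
      rw [mem_ball_zero_iff]
      rwa [norm_sub_rev] at h
  have hind : Integrable (fun y => Set.indicator (Metric.ball x 1)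
      (fun y => 4 * ‖x - y‖ ^ (-(3/4) : ℝ)) y) := by
    simp_rw [hcomp]
    exact hgint.comp_sub_left x
  have hindval : (∫ y, Set.indicator (Metric.ball x 1)
      (fun y => 4 * ‖x - y‖ ^ (-(3/4) : ℝ)) y) = K := by
    simp_rw [hcomp]
    rw [integral_sub_left_eq_self g volume x, hgval]
  -- integrability of the pieces
  have h1int : Integrable (fun y => (1 + ‖y‖ ^ 2) * ρ y) :=
    (hρint.add hmom).congr (ae_of_all _ fun y => by simp only [Pi.add_apply]; ring)
  have hh : Integrable (fun y => 5 * ((1 + ‖y‖ ^ 2) * ρ y) + 2 * (ρ y * |Real.log (ρ y)|)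
      + Set.indicator (Metric.ball x 1) (fun y => 4 * ‖x - y‖ ^ (-(3/4) : ℝ)) y) :=
    ((h1int.const_mul 5).add (hent.const_mul 2)).add hind
  -- the difference function and its domination
  have hx2 : (2:ℝ) ≤ ‖x‖ := hxnorm
  have hx0 : (0:ℝ) < ‖x‖ := by linarith
  have hfm : AEStronglyMeasurable
      (fun y => (Real.log ‖x‖ - Real.log ‖x - y‖) * ρ y) volume := by
    have hm0 : Measurable fun y : EuclideanSpace ℝ (Fin 2) => Real.log ‖x - y‖ :=
      Real.measurable_log.comp ((measurable_const.sub measurable_id).norm)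
    have hm1 : Measurable fun y : EuclideanSpace ℝ (Fin 2) =>
        Real.log ‖x‖ - Real.log ‖x - y‖ := measurable_const.sub hm0
    exact hm1.aestronglyMeasurable.mul hρint.aestronglyMeasurable
  have hae : ∀ᵐ (y : EuclideanSpace ℝ (Fin 2)) ∂volume, y ≠ x := by
    rw [ae_iff]
    have hset : {y : EuclideanSpace ℝ (Fin 2) | ¬ y ≠ x} = {x} := by ext y; simp
    rw [hset]
    exact measure_singleton x
  have hbound : ∀ᵐ (y : EuclideanSpace ℝ (Fin 2)) ∂volume,
      ‖(Real.log ‖x‖ - Real.log ‖x - y‖) * ρ y‖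
        ≤ 5 * ((1 + ‖y‖ ^ 2) * ρ y) + 2 * (ρ y * |Real.log (ρ y)|)
          + Set.indicator (Metric.ball x 1) (fun y => 4 * ‖x - y‖ ^ (-(3/4) : ℝ)) y := by
    filter_upwards [hae] with y hy
    rw [Real.norm_eq_abs]
    exact aux_pointwise x y hx2 hy (ρ y) (hρ0 y)
  have hf : Integrable (fun y => (Real.log ‖x‖ - Real.log ‖x - y‖) * ρ y) :=
    Integrable.mono' hh hfm hbound
  have hlog : Integrable (fun y => Real.log ‖x - y‖ * ρ y) := by
    have heq : (fun y : EuclideanSpace ℝ (Fin 2) => Real.log ‖x - y‖ * ρ y)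
        = fun y => Real.log ‖x‖ * ρ y
          - (Real.log ‖x‖ - Real.log ‖x - y‖) * ρ y := funext fun y => by ring
    rw [heq]
    exact (hρint.const_mul _).sub hf
  -- value of the integral of the difference
  have hIf : (∫ y, (Real.log ‖x‖ - Real.log ‖x - y‖) * ρ y)
      = Real.log ‖x‖ * β - ∫ y, Real.log ‖x - y‖ * ρ y := by
    have heq : (fun y : EuclideanSpace ℝ (Fin 2) =>
        (Real.log ‖x‖ - Real.log ‖x - y‖) * ρ y)
        = fun y => Real.log ‖x‖ * ρ y - Real.log ‖x - y‖ * ρ y := funext fun y => by ring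
    rw [heq, integral_sub (hρint.const_mul _) hlog, integral_const_mul, hβ]
  -- integral bounds
  have hsum : (∫ y, 5 * ((1 + ‖y‖ ^ 2) * ρ y) + 2 * (ρ y * |Real.log (ρ y)|)
      + Set.indicator (Metric.ball x 1) (fun y => 4 * ‖x - y‖ ^ (-(3/4) : ℝ)) y)
      ≤ 12 * A + K := by
    have hint1 : Integrable (fun y => 5 * ((1 + ‖y‖ ^ 2) * ρ y)) := h1int.const_mul 5
    have hint2 : Integrable (fun y => 2 * (ρ y * |Real.log (ρ y)|)) := hent.const_mul 2
    have hint12 : Integrable (fun y => 5 * ((1 + ‖y‖ ^ 2) * ρ y)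
        + 2 * (ρ y * |Real.log (ρ y)|)) := hint1.add hint2
    rw [integral_add hint12 hind, integral_add hint1 hint2, integral_const_mul,
      integral_const_mul, hindval]
    have hmom1 : (∫ y, (1 + ‖y‖ ^ 2) * ρ y) ≤ 2 * A := by
      have heq : (fun y : EuclideanSpace ℝ (Fin 2) => (1 + ‖y‖ ^ 2) * ρ y)
          = fun y => ρ y + ‖y‖ ^ 2 * ρ y := funext fun y => by ring
      rw [heq, integral_add hρint hmom, hβ]
      linarith
    linarith
  have habs : |∫ y, (Real.log ‖x‖ - Real.log ‖x - y‖) * ρ y| ≤ 12 * A + K := by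
    have hni := norm_integral_le_integral_norm
      (fun y => (Real.log ‖x‖ - Real.log ‖x - y‖) * ρ y) (μ := volume)
    simp only [Real.norm_eq_abs] at hni
    refine le_trans hni ?_
    refine le_trans (integral_mono_ae hf.abs hh ?_) hsum
    filter_upwards [hbound] with y hy
    rwa [Real.norm_eq_abs] at hy
  -- conclusion
  have hkey : (-(1 / (2 * π)) * ∫ y, Real.log ‖x - y‖ * ρ y)
      + (β / (2 * π)) * Real.log ‖x‖
      = (1 / (2 * π)) * ∫ y, (Real.log ‖x‖ - Real.log ‖x - y‖) * ρ y := by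
    rw [hIf]
    field_simp
    ring
  rw [hkey, abs_mul, abs_of_nonneg (by positivity : (0:ℝ) ≤ 1 / (2 * π))]
  calc (1 / (2 * π)) * |∫ y, (Real.log ‖x‖ - Real.log ‖x - y‖) * ρ y|
      ≤ (1 / (2 * π)) * (12 * A + K) :=
        mul_le_mul_of_nonneg_left habs (by positivity)
    _ = (12 * A + K) / (2 * π) := by ring
end
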